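/- arXiv:2502.02852 — 7 statements merged into one kernel-verified Lean document; each statement's English description precedes it below -/
import Mathlib

section
/- Sequential Gronwall bound by iterated integrals: if u : ℕ × [0,t] → ℝ₊ satisfies u(0,r) ≤ B for all r ∈ [0,t] and u(k,r) ≤ 2 ∫_{(r,t]} u(k-1,s) ρ(ds) for all k ≥ 1 and r ∈ [0,t], where ρ is a finite measure on (0,t], then u(k,r) ≤ B (2ρ((0,t]))^k / k! for all k ≥ 0 and r ∈ [0,t]; consequently ∑_{k≥0} u(k,r) ≤ B e^{2ρ((0,t])}. -/
open Real MeasureTheory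

/-! Write `F s = ρ (s, t]`. By induction on `k`, `u k r ≤ B (2 F r)^k / k!`; the inductive step is
`∫_{(r,t]} F^k dρ ≤ F(r)^(k+1) / (k+1)`, an equality when `ρ` has no atoms. By the layer-cake
formula this reduces to the tail estimate `ρ {s ∈ (r,t] | x ≤ F s} ≤ F r - x`, which holds because
that superlevel set is an initial segment of `(r,t]`, exhausted by intervals `(r,b]` with
`ρ (r,b] = F r - F b ≤ F r - x`. Finally `F r ≤ F 0` on `[0,t]`, and summing the bounds gives the
exponential. -/

open Set Filter

lemma measure_le_of_forall_measure_Ioc_le {ρ : Measure ℝ} {A : Set ℝ} {r : ℝ} {c : ENNReal}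
    (hA : A ⊆ Ioi r) (hbdd : BddAbove A) (h : ∀ b ∈ A, ρ (Ioc r b) ≤ c) : ρ A ≤ c := by
  rcases A.eq_empty_or_nonempty with rfl | hne
  · simp
  by_cases hmax : sSup A ∈ A
  · exact (measure_mono fun a ha => mem_Ioc.2 ⟨hA ha, le_csSup hbdd ha⟩).trans (h _ hmax)
  obtain ⟨w, hw_mono, hw_lim, hwA⟩ := exists_seq_tendsto_sSup hne hbdd
  have hcover : A ⊆ ⋃ n, Ioc r (w n) := by
    intro a ha
    have ha_lt : a < sSup A := (le_csSup hbdd ha).lt_of_ne fun h => hmax (h ▸ ha)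
    obtain ⟨n, hn⟩ := (hw_lim.eventually (lt_mem_nhds ha_lt)).exists
    exact mem_iUnion.2 ⟨n, hA ha, hn.le⟩
  calc ρ A ≤ ρ (⋃ n, Ioc r (w n)) := measure_mono hcover
    _ = ⨆ n, ρ (Ioc r (w n)) :=
      Monotone.measure_iUnion fun m n hmn => Ioc_subset_Ioc_right (hw_mono hmn)
    _ ≤ c := iSup_le fun n => h _ (hwA n)

lemma lintegral_Ioi_ofReal_sub_mul_pow {c : ℝ} (hc : 0 ≤ c) (m : ℕ) :
    ∫⁻ y in Ioi 0, ENNReal.ofReal ((c - y) * ((m + 1) * y ^ m)) =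
      ENNReal.ofReal (c ^ (m + 2) / (m + 2)) := by
  have hcont : Continuous fun y : ℝ => (c - y) * ((m + 1) * y ^ m) := by fun_prop
  have hvanish : ∫⁻ y in Ioi c, ENNReal.ofReal ((c - y) * ((m + 1) * y ^ m)) = 0 := by
    refine setLIntegral_eq_zero measurableSet_Ioi fun y (hy : c < y) => ?_
    have hy0 : 0 ≤ y := hc.trans hy.le
    exact ENNReal.ofReal_eq_zero.2 (mul_nonpos_of_nonpos_of_nonneg (by linarith) (by positivity))
  rw [← Ioc_union_Ioi_eq_Ioi hc, lintegral_union measurableSet_Ioi (Ioc_disjoint_Ioi le_rfl),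
    hvanish, add_zero, ← ofReal_integral_eq_lintegral_ofReal hcont.integrableOn_Ioc ?nonneg,
    ← intervalIntegral.integral_of_le hc]
  · have hexpand : ∀ y : ℝ,
        (c - y) * ((m + 1) * y ^ m) = (m + 1) * c * y ^ m - (m + 1) * y ^ (m + 1) :=
      fun y => by ring
    simp_rw [hexpand]
    rw [intervalIntegral.integral_sub (Continuous.intervalIntegrable (by fun_prop) _ _)
      (Continuous.intervalIntegrable (by fun_prop) _ _), intervalIntegral.integral_const_mul,
      intervalIntegral.integral_const_mul, integral_pow, integral_pow]
    congr 1
    simp only [zero_pow (Nat.succ_ne_zero _), sub_zero]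
    push_cast
    field_simp
    ring
  · exact (ae_restrict_iff' measurableSet_Ioc).2 (Eventually.of_forall fun y hy =>
      mul_nonneg (sub_nonneg.2 hy.2) (by have := hy.1.le; positivity))

lemma tsum_le_mul_exp_of_le_pow_div_factorial {a : ℕ → ℝ} {B x : ℝ} (ha : ∀ k, 0 ≤ a k)
    (hle : ∀ k, a k ≤ B * x ^ k / k.factorial) : ∑' k, a k ≤ B * exp x := by
  have hexp : HasSum (fun k => B * x ^ k / k.factorial) (B * exp x) := by
    simpa only [mul_div_assoc, Real.exp_eq_exp_ℝ] using
      (NormedSpace.expSeries_div_hasSum_exp x).mul_left B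
  exact hasSum_le hle (Summable.of_nonneg_of_le ha hle hexp.summable).hasSum hexp

section

variable {ρ : Measure ℝ} [IsFiniteMeasure ρ] {t : ℝ}

lemma antitone_measureReal_Ioc : Antitone fun s => ρ.real (Ioc s t) :=
  fun _ _ h => measureReal_mono (Ioc_subset_Ioc_left h)

lemma integrable_measureReal_Ioc_pow (k : ℕ) : Integrable (fun s => ρ.real (Ioc s t) ^ k) ρ :=
  Integrable.of_bound (antitone_measureReal_Ioc.measurable.pow_const k).aestronglyMeasurable
    (ρ.real univ ^ k) (Eventually.of_forall fun s => by
      rw [Real.norm_of_nonneg (by positivity)]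
      exact pow_le_pow_left₀ measureReal_nonneg (measureReal_mono (subset_univ _)) k)

lemma measure_restrict_Ioc_superlevel_le (r : ℝ) {x : ℝ} (hx : 0 ≤ x) :
    ρ.restrict (Ioc r t) {s | x ≤ ρ.real (Ioc s t)} ≤ ENNReal.ofReal (ρ.real (Ioc r t) - x) := by
  rw [Measure.restrict_apply' measurableSet_Ioc]
  refine measure_le_of_forall_measure_Ioc_le (fun s hs => hs.2.1) ⟨t, fun s hs => hs.2.2⟩ ?_
  rintro b ⟨hxb, hrb, hbt⟩
  have hsplit : ρ (Ioc r b) + ρ (Ioc b t) = ρ (Ioc r t) := by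
    rw [← measure_union (Ioc_disjoint_Ioc_of_le le_rfl) measurableSet_Ioc,
      Ioc_union_Ioc_eq_Ioc hrb.le hbt]
  rw [ENNReal.ofReal_sub _ hx, ofReal_measureReal]
  exact ENNReal.le_sub_of_add_le_right ENNReal.ofReal_ne_top
    (hsplit ▸ add_le_add_right (ENNReal.ofReal_le_of_le_toReal hxb) _)

lemma integral_measureReal_Ioc_pow_le (r : ℝ) (k : ℕ) :
    ∫ s in Ioc r t, ρ.real (Ioc s t) ^ k ∂ρ ≤ ρ.real (Ioc r t) ^ (k + 1) / (k + 1) := by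
  have hmeas : Measurable fun s => ρ.real (Ioc s t) := antitone_measureReal_Ioc.measurable
  cases k with
  | zero => simp
  | succ m =>
  have hpow : ∀ x : ℝ, ∫ y in 0..x, (m + 1) * y ^ m = x ^ (m + 1) := fun x => by
    rw [intervalIntegral.integral_const_mul, integral_pow]
    field_simp
    simp
  have hlayer := lintegral_comp_eq_lintegral_meas_le_mul (ρ.restrict (Ioc r t))
    (Eventually.of_forall fun s => measureReal_nonneg) hmeas.aemeasurable
    (g := fun y => (m + 1) * y ^ m) (fun _ _ => Continuous.intervalIntegrable (by fun_prop) _ _)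
    ((ae_restrict_iff' measurableSet_Ioi).2 (Eventually.of_forall fun y (hy : 0 < y) =>
      by positivity))
  simp only [hpow] at hlayer
  have hlint : ∫⁻ s in Ioc r t, ENNReal.ofReal (ρ.real (Ioc s t) ^ (m + 1)) ∂ρ ≤
      ENNReal.ofReal (ρ.real (Ioc r t) ^ (m + 2) / (m + 2)) :=
    calc _ = ∫⁻ y in Ioi 0, ρ.restrict (Ioc r t) {s | y ≤ ρ.real (Ioc s t)} *
          ENNReal.ofReal ((m + 1) * y ^ m) := hlayer
    _ ≤ ∫⁻ y in Ioi 0, ENNReal.ofReal ((ρ.real (Ioc r t) - y) * ((m + 1) * y ^ m)) :=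
        setLIntegral_mono' measurableSet_Ioi fun y (hy : 0 < y) =>
          (mul_le_mul_left (measure_restrict_Ioc_superlevel_le r hy.le) _).trans_eq
            (ENNReal.ofReal_mul' (by positivity)).symm
    _ = _ := lintegral_Ioi_ofReal_sub_mul_pow measureReal_nonneg m
  rw [integral_eq_lintegral_of_nonneg_ae (Eventually.of_forall fun s => by positivity)
    (hmeas.pow_const _).aestronglyMeasurable]
  exact ENNReal.toReal_le_of_le_ofReal (by positivity) (hlint.trans_eq (by push_cast; ring_nf))

lemma le_pow_div_factorial_of_le_two_mul_integral {u : ℕ → ℝ → ℝ} {a B : ℝ} (hB : 0 ≤ B)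
    (hpos : ∀ k, ∀ r ∈ Icc a t, 0 ≤ u k r) (h0 : ∀ r ∈ Icc a t, u 0 r ≤ B)
    (hrec : ∀ k, ∀ r ∈ Icc a t, u (k + 1) r ≤ 2 * ∫ s in Ioc r t, u k s ∂ρ) (k : ℕ) :
    ∀ r ∈ Icc a t, u k r ≤ B * (2 * ρ.real (Ioc r t)) ^ k / k.factorial := by
  induction k with
  | zero => simpa using h0
  | succ k ih =>
  intro r hr
  have hsub : Ioc r t ⊆ Icc a t := fun s hs => ⟨hr.1.trans hs.1.le, hs.2⟩
  set C := B * 2 ^ k / k.factorial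
  have hC : 0 ≤ C := by positivity
  have hint : ∫ s in Ioc r t, u k s ∂ρ ≤ C * ∫ s in Ioc r t, ρ.real (Ioc s t) ^ k ∂ρ := by
    rw [← integral_const_mul]
    refine integral_mono_of_nonneg
      ((ae_restrict_iff' measurableSet_Ioc).2 (Eventually.of_forall fun s hs =>
        hpos k s (hsub hs)))
      ((integrable_measureReal_Ioc_pow k).restrict.const_mul C)
      ((ae_restrict_iff' measurableSet_Ioc).2 (Eventually.of_forall fun s hs =>
        (ih s (hsub hs)).trans_eq (by rw [mul_pow]; ring)))
  calc u (k + 1) r ≤ 2 * ∫ s in Ioc r t, u k s ∂ρ := hrec k r hr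
    _ ≤ 2 * (C * (ρ.real (Ioc r t) ^ (k + 1) / (k + 1))) := by
      gcongr
      exact hint.trans (mul_le_mul_of_nonneg_left (integral_measureReal_Ioc_pow_le r k) hC)
    _ = B * (2 * ρ.real (Ioc r t)) ^ (k + 1) / (k + 1).factorial := by
      rw [Nat.factorial_succ]
      push_cast [C]
      field_simp
      ring

end

theorem stmt5_general (t : ℝ) (B : ℝ) (hB : 0 ≤ B)
    (ρ : Measure ℝ) [IsFiniteMeasure ρ]
    (u : ℕ → ℝ → ℝ)
    (hpos : ∀ k, ∀ r ∈ Set.Icc (0 : ℝ) t, 0 ≤ u k r)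
    (h0 : ∀ r ∈ Set.Icc (0 : ℝ) t, u 0 r ≤ B)
    (hrec : ∀ k : ℕ, ∀ r ∈ Set.Icc (0 : ℝ) t,
      u (k + 1) r ≤ 2 * ∫ s in Set.Ioc r t, u k s ∂ρ) :
    (∀ k : ℕ, ∀ r ∈ Set.Icc (0 : ℝ) t,
      u k r ≤ B * (2 * (ρ (Set.Ioc 0 t)).toReal) ^ k / Nat.factorial k) ∧
    (∀ r ∈ Set.Icc (0 : ℝ) t,
      ∑' k : ℕ, u k r ≤ B * Real.exp (2 * (ρ (Set.Ioc 0 t)).toReal)) := by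
  have hbound : ∀ k : ℕ, ∀ r ∈ Icc (0 : ℝ) t,
      u k r ≤ B * (2 * ρ.real (Ioc 0 t)) ^ k / k.factorial := fun k r hr => by
    have hmass : ρ.real (Ioc r t) ≤ ρ.real (Ioc 0 t) := antitone_measureReal_Ioc hr.1
    refine (le_pow_div_factorial_of_le_two_mul_integral hB hpos h0 hrec k r hr).trans ?_
    gcongr
  exact ⟨hbound, fun r hr =>
    tsum_le_mul_exp_of_le_pow_div_factorial (hpos · r hr) (hbound · r hr)⟩

/-- sequential Gronwall bound by iterated integrals. If
`u : ℕ × [0,t] → ℝ₊` satisfies `u 0 r ≤ B` and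
`u k r ≤ 2 ∫_{(r,t]} u (k-1) s ρ(ds)` for `k ≥ 1`, with `ρ` a finite measure on
`(0,t]`, then `u k r ≤ B (2ρ((0,t]))^k / k!` for all `k`, and
`∑_k u k r ≤ B e^{2ρ((0,t])}`. -/
theorem stmt5 (t : ℝ) (ht : 0 < t) (B : ℝ) (hB : 0 ≤ B)
    (ρ : Measure ℝ) [IsFiniteMeasure ρ] (hρ : ρ (Set.Ioc 0 t)ᶜ = 0)
    (u : ℕ → ℝ → ℝ) (hmeas : ∀ k, Measurable (u k))
    (hpos : ∀ k, ∀ r ∈ Set.Icc (0 : ℝ) t, 0 ≤ u k r)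
    (h0 : ∀ r ∈ Set.Icc (0 : ℝ) t, u 0 r ≤ B)
    (hrec : ∀ k : ℕ, ∀ r ∈ Set.Icc (0 : ℝ) t,
      u (k + 1) r ≤ 2 * ∫ s in Set.Ioc r t, u k s ∂ρ) :
    (∀ k : ℕ, ∀ r ∈ Set.Icc (0 : ℝ) t,
      u k r ≤ B * (2 * (ρ (Set.Ioc 0 t)).toReal) ^ k / Nat.factorial k) ∧
    (∀ r ∈ Set.Icc (0 : ℝ) t,
      ∑' k : ℕ, u k r ≤ B * Real.exp (2 * (ρ (Set.Ioc 0 t)).toReal)) :=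
  stmt5_general t B hB ρ u hpos h0 hrec
end

section
/- Uniqueness of bounded solutions to the linear backward equation system: if π, π' : [0,t] → ℝ² are bounded measurable functions both satisfying, for i=1,2 and j≠i, π_i(r) = λ_i + ∫_{(r,t]} π_j(s) b̄_ij(ds) - ∫_{(r,t]} π_i(s) b_ii(ds) for all r ∈ [0,t], then π = π' on [0,t]. -/
/-!
The difference of two solutions solves the homogeneous system, so
`g = |π₁ - π₁'| + |π₂ - π₂'|` satisfies `g r ≤ ∫_{(r,t]} g dν`, where `ν` is the sum of all the
coefficient measures. A backward Gronwall argument forces `g = 0`: let `c` be the infimum of the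
`r` with `g = 0` on `(r,t]`; the inequality at `c` gives `g c = 0`, and if `c > 0` pick `b < c`
with `ν (b,c) < 1`. Then `I = ∫_{(b,t]} g dν` satisfies `g ≤ I` on `(b,t]`, hence
`I = ∫_{(b,c)} g dν ≤ I · ν (b,c)`, so `I = 0` and `g` vanishes on `(b,t]`, contradicting the
choice of `c`.
-/

open MeasureTheory Set Filter
open scoped ENNReal

instance MeasureTheory.Measure.isLocallyFiniteMeasure_add {α : Type*} [MeasurableSpace α]
    [TopologicalSpace α] (μ ν : Measure α) [IsLocallyFiniteMeasure μ]
    [IsLocallyFiniteMeasure ν] : IsLocallyFiniteMeasure (μ + ν) where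
  finiteAtNhds x := by
    obtain ⟨s, hs, hμs⟩ := μ.finiteAt_nhds x
    obtain ⟨s', hs', hνs'⟩ := ν.finiteAt_nhds x
    refine ⟨s ∩ s', inter_mem hs hs', ?_⟩
    rw [Measure.add_apply]
    exact ENNReal.add_lt_top.2 ⟨(measure_mono inter_subset_left).trans_lt hμs,
      (measure_mono inter_subset_right).trans_lt hνs'⟩

theorem exists_lt_measure_Ioo_lt (ν : Measure ℝ) [IsLocallyFiniteMeasure ν] (c : ℝ) {ε : ℝ≥0∞}
    (hε : 0 < ε) : ∃ b < c, ν (Ioo b c) < ε := by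
  have hempty : ⋂ r > (0 : ℝ), Ioo (c - r) c = ∅ := by
    refine eq_empty_of_forall_notMem fun x hx => ?_
    simp only [mem_iInter, mem_Ioo] at hx
    have hxc := (hx 1 one_pos).2
    linarith [(hx (c - x) (by linarith)).1]
  have hlim := tendsto_measure_biInter_gt (μ := ν) (s := fun r => Ioo (c - r) c) (a := 0)
    (fun _ _ => measurableSet_Ioo.nullMeasurableSet)
    (fun _ _ _ hij => Ioo_subset_Ioo_left (by linarith)) ⟨1, one_pos, measure_Ioo_lt_top.ne⟩
  rw [hempty, measure_empty] at hlim
  obtain ⟨r, hr, hpos⟩ := ((hlim.eventually (gt_mem_nhds hε)).and self_mem_nhdsWithin).exists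
  exact ⟨c - r, by linarith, hr⟩

theorem integrableOn_Ioc_of_abs_le {μ : Measure ℝ} [IsLocallyFiniteMeasure μ] {u : ℝ → ℝ}
    {a t r C : ℝ} (hu : Measurable u) (hC : ∀ x ∈ Icc a t, |u x| ≤ C) (hr : a ≤ r) :
    IntegrableOn u (Ioc r t) μ :=
  Measure.integrableOn_of_bounded measure_Ioc_lt_top.ne hu.aestronglyMeasurable <|
    ae_restrict_of_forall_mem measurableSet_Ioc fun x hx => hC x ⟨hr.trans hx.1.le, hx.2⟩

theorem abs_sub_le_setIntegral_of_eq {α : Type*} [MeasurableSpace α] {μ μp μn : Measure α}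
    {s : Set α} {l x y : ℝ} {u u' v v' g : α → ℝ}
    (hx : x = l + (∫ z in s, u z ∂μ) - ((∫ z in s, v z ∂μp) - ∫ z in s, v z ∂μn))
    (hy : y = l + (∫ z in s, u' z ∂μ) - ((∫ z in s, v' z ∂μp) - ∫ z in s, v' z ∂μn))
    (hu : IntegrableOn u s (μ + μp + μn)) (hu' : IntegrableOn u' s (μ + μp + μn))
    (hv : IntegrableOn v s (μ + μp + μn)) (hv' : IntegrableOn v' s (μ + μp + μn))
    (hg : IntegrableOn g s (μ + μp + μn))
    (hug : ∀ z, |u z - u' z| ≤ g z) (hvg : ∀ z, |v z - v' z| ≤ g z) :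
    |x - y| ≤ ∫ z in s, g z ∂(μ + μp + μn) := by
  have hμ : μ ≤ μ + μp + μn := Measure.le_add_right (Measure.le_add_right le_rfl)
  have hμp : μp ≤ μ + μp + μn := Measure.le_add_right (Measure.le_add_left le_rfl)
  have hμn : μn ≤ μ + μp + μn := Measure.le_add_left le_rfl
  have hdiff : x - y = (∫ z in s, u z - u' z ∂μ) - (∫ z in s, v z - v' z ∂μp) +
      ∫ z in s, v z - v' z ∂μn := by
    rw [hx, hy, integral_sub (hu.mono_measure hμ) (hu'.mono_measure hμ),
      integral_sub (hv.mono_measure hμp) (hv'.mono_measure hμp),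
      integral_sub (hv.mono_measure hμn) (hv'.mono_measure hμn)]
    ring
  calc |x - y| ≤ |∫ z in s, u z - u' z ∂μ| + |∫ z in s, v z - v' z ∂μp| +
        |∫ z in s, v z - v' z ∂μn| := by
        rw [hdiff]
        exact (abs_add_le _ _).trans (add_le_add_left (abs_sub _ _) _)
    _ ≤ (∫ z in s, g z ∂μ) + (∫ z in s, g z ∂μp) + ∫ z in s, g z ∂μn := by
        gcongr
        · exact norm_integral_le_of_norm_le (f := fun z => u z - u' z) (hg.mono_measure hμ)
            (ae_of_all _ hug)
        · exact norm_integral_le_of_norm_le (f := fun z => v z - v' z) (hg.mono_measure hμp)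
            (ae_of_all _ hvg)
        · exact norm_integral_le_of_norm_le (f := fun z => v z - v' z) (hg.mono_measure hμn)
            (ae_of_all _ hvg)
    _ = ∫ z in s, g z ∂(μ + μp + μn) := by
        obtain ⟨hg₁₂, hg₃⟩ := integrableOn_add_measure.1 hg
        obtain ⟨hg₁, hg₂⟩ := integrableOn_add_measure.1 hg₁₂
        rw [Measure.restrict_add, integral_add_measure hg₁₂ hg₃, Measure.restrict_add,
          integral_add_measure hg₁ hg₂]

section BackwardGronwall

variable {ν : Measure ℝ} {g : ℝ → ℝ} {a t : ℝ}

theorem eqOn_zero_Icc_of_le_setIntegral_Ioc (hg : ∀ s, 0 ≤ g s)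
    (hle : ∀ r ∈ Icc a t, g r ≤ ∫ s in Ioc r t, g s ∂ν) {c : ℝ} (hc : c ∈ Icc a t)
    (hzero : EqOn g 0 (Ioc c t)) : EqOn g 0 (Icc c t) := by
  intro s hs
  rcases hs.1.eq_or_lt with hcs | hcs
  · rw [← hcs]
    exact le_antisymm ((hle c hc).trans_eq (setIntegral_eq_zero_of_forall_eq_zero hzero)) (hg c)
  · exact hzero ⟨hcs, hs.2⟩

theorem exists_lt_eqOn_zero_Ioc_of_le_setIntegral_Ioc [IsLocallyFiniteMeasure ν]
    (hg : ∀ s, 0 ≤ g s) (hint : IntegrableOn g (Ioc a t) ν)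
    (hle : ∀ r ∈ Icc a t, g r ≤ ∫ s in Ioc r t, g s ∂ν) {c : ℝ} (hac : a < c) (hct : c ≤ t)
    (hzero : EqOn g 0 (Ioc c t)) : ∃ b ∈ Ico a c, EqOn g 0 (Ioc b t) := by
  have hzero' := eqOn_zero_Icc_of_le_setIntegral_Ioc hg hle ⟨hac.le, hct⟩ hzero
  obtain ⟨b₀, hb₀c, hb₀⟩ := exists_lt_measure_Ioo_lt ν c one_pos
  set b := max a b₀
  have hbc : b < c := max_lt hac hb₀c
  have hsmall : ν.real (Ioo b c) < 1 := by
    refine ENNReal.toReal_lt_of_lt_ofReal ?_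
    rw [ENNReal.ofReal_one]
    exact (measure_mono (Ioo_subset_Ioo_left (le_max_right a b₀))).trans_lt hb₀
  set I := ∫ s in Ioc b t, g s ∂ν
  have hintb : IntegrableOn g (Ioc b t) ν :=
    hint.mono_set (Ioc_subset_Ioc_left (le_max_left _ _))
  have hgI : ∀ r ∈ Ioc b t, g r ≤ I := fun r hr =>
    (hle r ⟨(le_max_left _ _).trans hr.1.le, hr.2⟩).trans <| setIntegral_mono_set hintb
      (ae_of_all _ hg) (Ioc_subset_Ioc_left hr.1.le).eventuallyLE
  have hI : I ≤ I * ν.real (Ioo b c) := calc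
    I = ∫ s in Ioo b c, g s ∂ν :=
      setIntegral_eq_of_subset_of_forall_sdiff_eq_zero measurableSet_Ioc
        (Ioo_subset_Ioc_self.trans (Ioc_subset_Ioc_right hct))
        fun s hs => hzero' ⟨not_lt.1 fun h => hs.2 ⟨hs.1.1, h⟩, hs.1.2⟩
    _ ≤ I * ν.real (Ioo b c) := (le_abs_self _).trans <|
      norm_setIntegral_le_of_norm_le_const (f := g) measure_Ioo_lt_top fun s hs =>
        (abs_of_nonneg (hg s)).trans_le (hgI s ⟨hs.1, hs.2.le.trans hct⟩)
  have hI0 : I ≤ 0 := by nlinarith [show 0 ≤ I from integral_nonneg hg]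
  exact ⟨b, ⟨le_max_left _ _, hbc⟩, fun r hr => le_antisymm ((hgI r hr).trans hI0) (hg r)⟩

theorem eqOn_zero_of_le_setIntegral_Ioc [IsLocallyFiniteMeasure ν] (hg : ∀ s, 0 ≤ g s)
    (hint : IntegrableOn g (Ioc a t) ν) (hle : ∀ r ∈ Icc a t, g r ≤ ∫ s in Ioc r t, g s ∂ν) :
    EqOn g 0 (Icc a t) := by
  intro r hr
  have hat : a ≤ t := hr.1.trans hr.2
  set S := {c ∈ Icc a t | EqOn g 0 (Ioc c t)}
  have htS : t ∈ S := ⟨⟨hat, le_rfl⟩, by simp⟩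
  have hbdd : BddBelow S := ⟨a, fun c hc => hc.1.1⟩
  have hac : a ≤ sInf S := le_csInf ⟨t, htS⟩ fun c hc => hc.1.1
  have hct : sInf S ≤ t := csInf_le hbdd htS
  have hzero : EqOn g 0 (Ioc (sInf S) t) := fun s hs => by
    obtain ⟨c, hcS, hcs⟩ := (csInf_lt_iff hbdd ⟨t, htS⟩).1 hs.1
    exact hcS.2 ⟨hcs, hs.2⟩
  rcases hac.eq_or_lt with hac | hac
  · rw [← hac] at hzero
    exact eqOn_zero_Icc_of_le_setIntegral_Ioc hg hle ⟨le_rfl, hat⟩ hzero hr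
  · obtain ⟨b, hb, hzero_b⟩ :=
      exists_lt_eqOn_zero_Ioc_of_le_setIntegral_Ioc hg hint hle hac hct hzero
    exact absurd (csInf_le hbdd ⟨⟨hb.1, hb.2.le.trans hct⟩, hzero_b⟩) (not_le.2 hb.2)

end BackwardGronwall

theorem stmt6_general (t : ℝ) (lam : Fin 2 → ℝ)
    (bbar : Fin 2 → Fin 2 → StieltjesFunction ℝ)
    (bp bn : Fin 2 → StieltjesFunction ℝ)
    (p q : Fin 2 → ℝ → ℝ)
    (hp_meas : ∀ i, Measurable (p i)) (hq_meas : ∀ i, Measurable (q i))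
    (hp_bdd : ∃ C, ∀ i, ∀ r ∈ Set.Icc (0 : ℝ) t, |p i r| ≤ C)
    (hq_bdd : ∃ C, ∀ i, ∀ r ∈ Set.Icc (0 : ℝ) t, |q i r| ≤ C)
    (hp : ∀ i j : Fin 2, i ≠ j → ∀ r ∈ Set.Icc (0 : ℝ) t,
      p i r = lam i + (∫ s in Set.Ioc r t, p j s ∂(bbar i j).measure) -
        ((∫ s in Set.Ioc r t, p i s ∂(bp i).measure) -
          ∫ s in Set.Ioc r t, p i s ∂(bn i).measure))
    (hq : ∀ i j : Fin 2, i ≠ j → ∀ r ∈ Set.Icc (0 : ℝ) t,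
      q i r = lam i + (∫ s in Set.Ioc r t, q j s ∂(bbar i j).measure) -
        ((∫ s in Set.Ioc r t, q i s ∂(bp i).measure) -
          ∫ s in Set.Ioc r t, q i s ∂(bn i).measure)) :
    ∀ i, ∀ r ∈ Set.Icc (0 : ℝ) t, p i r = q i r := by
  obtain ⟨Cp, hCp⟩ := hp_bdd
  obtain ⟨Cq, hCq⟩ := hq_bdd
  have hpq_int : ∀ (μ : Measure ℝ) [IsLocallyFiniteMeasure μ] (k : Fin 2) (r : ℝ), 0 ≤ r →
      IntegrableOn (p k) (Ioc r t) μ ∧ IntegrableOn (q k) (Ioc r t) μ := fun _ _ k _ hr =>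
    ⟨integrableOn_Ioc_of_abs_le (hp_meas k) (hCp k) hr,
      integrableOn_Ioc_of_abs_le (hq_meas k) (hCq k) hr⟩
  set g : ℝ → ℝ := fun s => |p 0 s - q 0 s| + |p 1 s - q 1 s|
  have hg_int : ∀ (μ : Measure ℝ) [IsLocallyFiniteMeasure μ] (r : ℝ), 0 ≤ r →
      IntegrableOn g (Ioc r t) μ := fun μ _ r hr =>
    ((hpq_int μ 0 r hr).1.sub (hpq_int μ 0 r hr).2).abs.add
      ((hpq_int μ 1 r hr).1.sub (hpq_int μ 1 r hr).2).abs
  have hdiff_le_g : ∀ k s, |p k s - q k s| ≤ g s := by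
    intro k s
    fin_cases k <;> simp [g]
  have hdiff_le_integral : ∀ i j, i ≠ j → ∀ r ∈ Icc 0 t, |p i r - q i r| ≤
      ∫ s in Ioc r t, g s ∂((bbar i j).measure + (bp i).measure + (bn i).measure) :=
    fun i j hij r hr => abs_sub_le_setIntegral_of_eq (hp i j hij r hr) (hq i j hij r hr)
      (hpq_int _ j r hr.1).1 (hpq_int _ j r hr.1).2 (hpq_int _ i r hr.1).1
      (hpq_int _ i r hr.1).2 (hg_int _ r hr.1) (hdiff_le_g j) (hdiff_le_g i)
  set ν₀ := (bbar 0 1).measure + (bp 0).measure + (bn 0).measure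
  set ν₁ := (bbar 1 0).measure + (bp 1).measure + (bn 1).measure
  have hg_zero : EqOn g 0 (Icc 0 t) := by
    refine eqOn_zero_of_le_setIntegral_Ioc (ν := ν₀ + ν₁) (fun s => by positivity)
      (hg_int _ 0 le_rfl) fun r hr => ?_
    calc g r ≤ (∫ s in Ioc r t, g s ∂ν₀) + ∫ s in Ioc r t, g s ∂ν₁ :=
          add_le_add (hdiff_le_integral 0 1 (by decide) r hr)
            (hdiff_le_integral 1 0 (by decide) r hr)
      _ = ∫ s in Ioc r t, g s ∂(ν₀ + ν₁) := by
          rw [Measure.restrict_add ν₀ ν₁,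
            integral_add_measure (hg_int ν₀ r hr.1) (hg_int ν₁ r hr.1)]
  intro i r hr
  exact sub_eq_zero.1 (abs_nonpos_iff.1 ((hdiff_le_g i r).trans_eq (hg_zero hr)))

/-- uniqueness of bounded solutions to the linear backward equation
system. The diagonal coefficient `b i i` is a right-continuous function of locally
bounded variation, represented as the difference `bp i - bn i` of two Stieltjes
functions; `bbar i j` (`i ≠ j`) is an increasing right-continuous function with
`bbar i j 0 = 0`. If two bounded measurable functions `π, π' : [0,t] → ℝ²` both satisfy
`π i r = λ i + ∫_{(r,t]} π j dbbar i j − ∫_{(r,t]} π i db i i` on `[0,t]`,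
then they coincide on `[0,t]`. -/
theorem stmt6 (t : ℝ) (ht : 0 < t) (lam : Fin 2 → ℝ)
    (bbar : Fin 2 → Fin 2 → StieltjesFunction ℝ)
    (hbbar0 : ∀ i j : Fin 2, i ≠ j → bbar i j 0 = 0)
    (bp bn : Fin 2 → StieltjesFunction ℝ)
    (hb0 : ∀ i, bp i 0 - bn i 0 = 0)
    (p q : Fin 2 → ℝ → ℝ)
    (hp_meas : ∀ i, Measurable (p i)) (hq_meas : ∀ i, Measurable (q i))
    (hp_bdd : ∃ C, ∀ i, ∀ r ∈ Set.Icc (0 : ℝ) t, |p i r| ≤ C)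
    (hq_bdd : ∃ C, ∀ i, ∀ r ∈ Set.Icc (0 : ℝ) t, |q i r| ≤ C)
    (hp : ∀ i j : Fin 2, i ≠ j → ∀ r ∈ Set.Icc (0 : ℝ) t,
      p i r = lam i + (∫ s in Set.Ioc r t, p j s ∂(bbar i j).measure) -
        ((∫ s in Set.Ioc r t, p i s ∂(bp i).measure) -
          ∫ s in Set.Ioc r t, p i s ∂(bn i).measure))
    (hq : ∀ i j : Fin 2, i ≠ j → ∀ r ∈ Set.Icc (0 : ℝ) t,
      q i r = lam i + (∫ s in Set.Ioc r t, q j s ∂(bbar i j).measure) -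
        ((∫ s in Set.Ioc r t, q i s ∂(bp i).measure) -
          ∫ s in Set.Ioc r t, q i s ∂(bn i).measure)) :
    ∀ i, ∀ r ∈ Set.Icc (0 : ℝ) t, p i r = q i r :=
  stmt6_general t lam bbar bp bn p q hp_meas hq_meas hp_bdd hq_bdd hp hq
end

section
/- Existence and uniqueness of the bounded solution to the two-type linear (first-moment) backward system: for any t ≥ 0 and λ ∈ ℝ², there exists a unique bounded function r ↦ π(r) = (π₁(r),π₂(r)) ∈ ℝ² on [0,t] satisfying π_i(r) = λ_i + ∫_{(r,t]} π_j(s) b̄_ij(ds) - ∫_{(r,t]} π_i(s) b_ii(ds) for i=1,2, j≠i. -/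
open Real MeasureTheory
open Set Filter Topology
open scoped Nat

/-!
Let `ν` be the sum of all coefficient measures restricted to `(0, t]` and `H r = ν (r, ∞)`.
The system is a fixed-point problem `p = T p` for an affine operator with
`‖T f r - T g r‖ ≤ ∫_{(r,∞)} ‖f - g‖ dν`. Since `ν {s > r | x ≤ H s} ≤ H r - x`, the layer-cake
formula gives `∫_{(r,∞)} H ^ n dν ≤ H r ^ (n + 1) / (n + 1)` even when `ν` has atoms, so iterating
the estimate bounds the `n`-th Picard increment, and the difference of two bounded solutions, by
`C H r ^ n / n!`. Summing gives existence; letting `n → ∞` gives uniqueness.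
-/

theorem lintegral_ofReal_pow_le_of_measure_le {α : Type*} [MeasurableSpace α] {μ : Measure α}
    {f : α → ℝ} (hf_nonneg : 0 ≤ f) (hf : Measurable f) {c : ℝ} (hc : 0 ≤ c)
    (h : ∀ x > 0, μ {a | x ≤ f a} ≤ ENNReal.ofReal (c - x)) (n : ℕ) :
    ∫⁻ a, ENNReal.ofReal (f a ^ (n + 1)) ∂μ ≤ ENNReal.ofReal (c ^ (n + 2) / (n + 2)) := by
  set g : ℝ → ℝ := fun x => (n + 1) * x ^ n
  have hg : ∀ y, ∫ x in (0 : ℝ)..y, g x = y ^ (n + 1) := fun y => by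
    simp only [g, intervalIntegral.integral_const_mul, integral_pow]
    field_simp
    simp
  have hg_int : ∀ y > 0, IntervalIntegrable g volume 0 y := fun y _ =>
    (continuous_const.mul (continuous_pow n)).intervalIntegrable 0 y
  have hg_nonneg : ∀ᵐ x ∂volume.restrict (Ioi 0), 0 ≤ g x :=
    (ae_restrict_iff' measurableSet_Ioi).2 (Eventually.of_forall fun x hx => by
      have : (0 : ℝ) < x := hx
      positivity)
  -- both sides are layer-cake integrals; the right one for the identity on `(0, c]`
  have layer_f := lintegral_comp_eq_lintegral_meas_le_mul μ (Eventually.of_forall hf_nonneg)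
    hf.aemeasurable hg_int hg_nonneg
  have layer_id := lintegral_comp_eq_lintegral_meas_le_mul (volume.restrict (Ioc 0 c))
    ((ae_restrict_iff' measurableSet_Ioc).2 (Eventually.of_forall fun y hy => hy.1.le))
    measurable_id.aemeasurable hg_int hg_nonneg
  simp only [hg] at layer_f layer_id
  calc ∫⁻ a, ENNReal.ofReal (f a ^ (n + 1)) ∂μ
      ≤ ∫⁻ x in Ioi 0, volume.restrict (Ioc 0 c) {y | x ≤ y} * ENNReal.ofReal (g x) := by
        rw [layer_f]
        refine setLIntegral_mono' measurableSet_Ioi fun x (hx : 0 < x) => ?_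
        gcongr
        refine (h x hx).trans ?_
        rw [← Real.volume_Icc, Measure.restrict_apply' measurableSet_Ioc]
        exact measure_mono fun y hy => ⟨hy.1, hx.trans_le hy.1, hy.2⟩
    _ = ∫⁻ y in Ioc 0 c, ENNReal.ofReal (y ^ (n + 1)) := layer_id.symm
    _ = ENNReal.ofReal (c ^ (n + 2) / (n + 2)) := by
        rw [← ofReal_integral_eq_lintegral_ofReal, ← intervalIntegral.integral_of_le hc,
          integral_pow]
        · congr 1; push_cast; ring
        · exact (continuous_pow _).integrableOn_Ioc
        · exact (ae_restrict_iff' measurableSet_Ioc).2 (Eventually.of_forall fun y hy =>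
            pow_nonneg hy.1.le _)

section TailMass

variable {ν : Measure ℝ} [IsFiniteMeasure ν]

theorem antitone_measureReal_Ioi : Antitone fun r => ν.real (Ioi r) :=
  fun _ _ h => measureReal_mono (Ioi_subset_Ioi h)

theorem measureReal_Ioi_le_univ (r : ℝ) : ν.real (Ioi r) ≤ ν.real univ :=
  measureReal_mono (subset_univ _)

theorem exists_measureReal_Ioi_lt {x : ℝ} (hx : 0 < x) : ∃ u, ν.real (Ioi u) < x := by
  have h := tendsto_measure_iInter_atTop (μ := ν) (s := Ioi)
    (fun _ => measurableSet_Ioi.nullMeasurableSet) (fun _ _ h => Ioi_subset_Ioi h)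
    ⟨0, measure_ne_top _ _⟩
  have hempty : ⋂ u : ℝ, Ioi u = ∅ := iInter_eq_empty_iff.2 fun y => ⟨y, lt_irrefl y⟩
  rw [hempty, measure_empty] at h
  exact (((ENNReal.tendsto_toReal ENNReal.zero_ne_top).comp h).eventually
    (gt_mem_nhds hx)).exists

theorem measure_setOf_le_measureReal_Ioi_le {x : ℝ} (hx : 0 < x) (r : ℝ) :
    ν ({s | x ≤ ν.real (Ioi s)} ∩ Ioi r) ≤ ENNReal.ofReal (ν.real (Ioi r) - x) := by
  set S := {s | x ≤ ν.real (Ioi s)} ∩ Ioi r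
  have hIoc : ∀ s ∈ S, ν (Ioc r s) ≤ ENNReal.ofReal (ν.real (Ioi r) - x) := by
    rintro s ⟨hxs, hrs⟩
    rw [← Ioi_sdiff_Ioi, ← ofReal_measureReal,
      measureReal_sdiff (Ioi_subset_Ioi (le_of_lt hrs)) measurableSet_Ioi]
    exact ENNReal.ofReal_le_ofReal (sub_le_sub_left hxs _)
  obtain ⟨u, hu⟩ := exists_measureReal_Ioi_lt (ν := ν) hx
  have hbdd : BddAbove S := ⟨u, fun s hs => le_of_not_gt fun hus =>
    (hu.trans_le hs.1).not_ge (antitone_measureReal_Ioi hus.le)⟩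
  rcases S.eq_empty_or_nonempty with hS | hS
  · simp [hS]
  obtain ⟨v, hv_mono, hv_lim, hvS⟩ := exists_seq_tendsto_sSup hS hbdd
  by_cases ha : sSup S ∈ S
  · exact (measure_mono (show S ⊆ Ioc r (sSup S) from fun s hs => ⟨hs.2, le_csSup hbdd hs⟩)).trans
      (hIoc _ ha)
  have hcover : S ⊆ ⋃ n, Ioc r (v n) := by
    intro s hs
    have hlt : s < sSup S := (le_csSup hbdd hs).lt_of_ne fun h => ha (h ▸ hs)
    obtain ⟨n, hn⟩ := (hv_lim.eventually (lt_mem_nhds hlt)).exists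
    exact mem_iUnion_of_mem n ⟨hs.2, hn.le⟩
  calc ν S ≤ ν (⋃ n, Ioc r (v n)) := measure_mono hcover
    _ = ⨆ n, ν (Ioc r (v n)) :=
        Monotone.measure_iUnion fun m n h => Ioc_subset_Ioc_right (hv_mono h)
    _ ≤ _ := iSup_le fun n => hIoc _ (hvS n)

theorem integrable_measureReal_Ioi_pow {μ : Measure ℝ} [IsFiniteMeasure μ] (n : ℕ) :
    Integrable (fun s => ν.real (Ioi s) ^ n) μ :=
  Integrable.of_bound (antitone_measureReal_Ioi.measurable.pow_const n).aestronglyMeasurable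
    (ν.real univ ^ n) (Eventually.of_forall fun s => by
      rw [Real.norm_of_nonneg (by positivity)]
      exact pow_le_pow_left₀ measureReal_nonneg (measureReal_Ioi_le_univ s) n)

theorem integral_measureReal_Ioi_pow_le (n : ℕ) (r : ℝ) :
    ∫ s in Ioi r, ν.real (Ioi s) ^ n ∂ν ≤ ν.real (Ioi r) ^ (n + 1) / (n + 1) := by
  rcases n with _ | n
  · simp
  have hH := antitone_measureReal_Ioi (ν := ν).measurable
  have hlevel : ∀ x > 0, ν.restrict (Ioi r) {s | x ≤ ν.real (Ioi s)} ≤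
      ENNReal.ofReal (ν.real (Ioi r) - x) := fun x hx => by
    rw [Measure.restrict_apply (measurableSet_le measurable_const hH)]
    exact measure_setOf_le_measureReal_Ioi_le hx r
  rw [integral_eq_lintegral_of_nonneg_ae (Eventually.of_forall fun s => by positivity)
    (hH.pow_const _).aestronglyMeasurable]
  refine ENNReal.toReal_le_of_le_ofReal (by positivity)
    ((lintegral_ofReal_pow_le_of_measure_le (fun s => measureReal_nonneg) hH measureReal_nonneg
      hlevel n).trans_eq ?_)
  push_cast
  ring_nf

theorem le_mul_pow_div_factorial_of_le_setIntegral {d : ℕ → ℝ → ℝ} {C : ℝ}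
    (hd_nonneg : ∀ n s, 0 ≤ d n s) (hd_zero : ∀ s, d 0 s ≤ C)
    (hd_succ : ∀ n r, d (n + 1) r ≤ ∫ s in Ioi r, d n s ∂ν) (n : ℕ) (r : ℝ) :
    d n r ≤ C * ν.real (Ioi r) ^ n / n ! := by
  induction n generalizing r with
  | zero => simpa using hd_zero r
  | succ n ih =>
    have hC : 0 ≤ C := (hd_nonneg 0 r).trans (hd_zero r)
    calc d (n + 1) r ≤ ∫ s in Ioi r, d n s ∂ν := hd_succ n r
      _ ≤ ∫ s in Ioi r, C / n ! * ν.real (Ioi s) ^ n ∂ν :=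
          integral_mono_of_nonneg (Eventually.of_forall (hd_nonneg n))
            ((integrable_measureReal_Ioi_pow n).const_mul _)
            (Eventually.of_forall fun s => (ih s).trans_eq (by ring))
      _ = C / n ! * ∫ s in Ioi r, ν.real (Ioi s) ^ n ∂ν := integral_const_mul _ _
      _ ≤ C / n ! * (ν.real (Ioi r) ^ (n + 1) / (n + 1)) := by
          gcongr
          exact integral_measureReal_Ioi_pow_le n r
      _ = C * ν.real (Ioi r) ^ (n + 1) / (n + 1)! := by
          rw [Nat.factorial_succ]
          push_cast
          field_simp

end TailMass

section Volterra

variable {E : Type*} [NormedAddCommGroup E] [MeasurableSpace E]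

def boundedMeasurable (E : Type*) [NormedAddCommGroup E] [MeasurableSpace E] : Set (ℝ → E) :=
  {f | Measurable f ∧ ∃ C, ∀ r, ‖f r‖ ≤ C}

theorem zero_mem_boundedMeasurable : (0 : ℝ → E) ∈ boundedMeasurable E :=
  ⟨measurable_const, 0, fun _ => by simp⟩

def VolterraDominated (ν : Measure ℝ) (T : (ℝ → E) → ℝ → E) : Prop :=
  ∀ f ∈ boundedMeasurable E, ∀ g ∈ boundedMeasurable E, ∀ r,
    ‖T f r - T g r‖ ≤ ∫ s in Ioi r, ‖f s - g s‖ ∂ν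

variable {ν : Measure ℝ} [IsFiniteMeasure ν] {T : (ℝ → E) → ℝ → E}

theorem setIntegral_Ioi_le_measureReal_mul {u : ℝ → ℝ} (hu : 0 ≤ u) {C : ℝ} (huC : ∀ s, u s ≤ C)
    (r : ℝ) :
    ∫ s in Ioi r, u s ∂ν ≤ ν.real (Ioi r) * C := by
  rw [← smul_eq_mul, ← setIntegral_const]
  exact integral_mono_of_nonneg (Eventually.of_forall hu) (integrable_const C)
    (Eventually.of_forall huC)

theorem VolterraDominated.mapsTo (hT : VolterraDominated ν T)
    (hmeas : ∀ f ∈ boundedMeasurable E, Measurable (T f)) (h0 : ∃ C, ∀ r, ‖T 0 r‖ ≤ C) :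
    MapsTo T (boundedMeasurable E) (boundedMeasurable E) := by
  intro f hf
  obtain ⟨C₀, hC₀⟩ := h0
  obtain ⟨C, hC⟩ := hf.2
  refine ⟨hmeas f hf, C₀ + ν.real univ * C, fun r => ?_⟩
  have hC_nonneg : 0 ≤ C := (norm_nonneg _).trans (hC 0)
  calc ‖T f r‖ ≤ ‖T 0 r‖ + ‖T f r - T 0 r‖ := norm_le_insert' _ _
    _ ≤ C₀ + ν.real (Ioi r) * C :=
        add_le_add (hC₀ r) ((hT f hf 0 zero_mem_boundedMeasurable r).trans
          (setIntegral_Ioi_le_measureReal_mul (fun _ => norm_nonneg _)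
            (fun s => by simpa using hC s) r))
    _ ≤ C₀ + ν.real univ * C := by
        have := measureReal_Ioi_le_univ (ν := ν) r
        gcongr

theorem VolterraDominated.dist_iterate_le (hT : VolterraDominated ν T)
    (hmaps : MapsTo T (boundedMeasurable E) (boundedMeasurable E)) {C : ℝ}
    (hC : ∀ r, ‖T 0 r‖ ≤ C) (n : ℕ) (r : ℝ) :
    dist (T^[n] 0 r) (T^[n + 1] 0 r) ≤ C * ν.real univ ^ n / n ! := by
  have hP : ∀ n, T^[n] 0 ∈ boundedMeasurable E := fun n =>
    hmaps.iterate n zero_mem_boundedMeasurable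
  have hC_nonneg : 0 ≤ C := (norm_nonneg _).trans (hC 0)
  have hH := measureReal_Ioi_le_univ (ν := ν) r
  rw [dist_comm, dist_eq_norm]
  refine (le_mul_pow_div_factorial_of_le_setIntegral (ν := ν)
    (d := fun n r => ‖T^[n + 1] 0 r - T^[n] 0 r‖) (fun _ _ => norm_nonneg _)
    (fun s => by simpa using hC s) (fun n r => ?_) n r).trans (by gcongr)
  have h := hT _ (hP (n + 1)) _ (hP n) r
  rwa [← Function.iterate_succ_apply' T, ← Function.iterate_succ_apply' T] at h

theorem VolterraDominated.exists_fixedPoint [CompleteSpace E] [BorelSpace E]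
    (hT : VolterraDominated ν T) (hmaps : MapsTo T (boundedMeasurable E) (boundedMeasurable E)) :
    ∃ p ∈ boundedMeasurable E, T p = p := by
  set P : ℕ → ℝ → E := fun n => T^[n] 0
  have hP : ∀ n, P n ∈ boundedMeasurable E := fun n =>
    hmaps.iterate n zero_mem_boundedMeasurable
  have hP_succ : ∀ n, P (n + 1) = T (P n) := fun n => Function.iterate_succ_apply' T n 0
  obtain ⟨C, hC⟩ := (hmaps zero_mem_boundedMeasurable).2
  set a : ℕ → ℝ := fun n => C * ν.real univ ^ n / (n ! : ℝ)
  have ha : Summable a := by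
    simpa [a, mul_div_assoc] using (Real.summable_pow_div_factorial _).mul_left C
  have hinc : ∀ n r, dist (P n r) (P (n + 1) r) ≤ a n := hT.dist_iterate_le hmaps hC
  have hlim : ∀ r, Tendsto (fun n => P n r) atTop (𝓝 (limUnder atTop fun n => P n r)) :=
    fun r => (cauchySeq_of_dist_le_of_summable a (hinc · r) ha).tendsto_limUnder
  set p : ℝ → E := fun r => limUnder atTop fun n => P n r
  set δ : ℕ → ℝ := fun n => ∑' m, a (n + m)
  have hδ : ∀ n r, dist (P n r) (p r) ≤ δ n := fun n r =>
    dist_le_tsum_of_dist_le_of_tendsto a (hinc · r) ha (hlim r) n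
  have hδ_lim : Tendsto δ atTop (𝓝 0) :=
    (tendsto_sum_nat_add a).congr fun n => tsum_congr fun m => by rw [add_comm]
  have hp : p ∈ boundedMeasurable E :=
    ⟨measurable_of_tendsto_metrizable (fun n => (hP n).1) (tendsto_pi_nhds.2 hlim),
      δ 0, fun r => by simpa [P] using hδ 0 r⟩
  refine ⟨p, hp, funext fun r => tendsto_nhds_unique ?_ ((hlim r).comp (tendsto_add_atTop_nat 1))⟩
  refine tendsto_iff_dist_tendsto_zero.2 (squeeze_zero (fun n => dist_nonneg) (fun n => ?_)
    (by simpa using hδ_lim.const_mul (ν.real (Ioi r))))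
  calc dist ((P ∘ (· + 1)) n r) (T p r) = ‖T (P n) r - T p r‖ := by
        simp only [Function.comp, hP_succ, dist_eq_norm]
    _ ≤ ∫ s in Ioi r, ‖P n s - p s‖ ∂ν := hT _ (hP n) _ hp r
    _ ≤ ν.real (Ioi r) * δ n :=
        setIntegral_Ioi_le_measureReal_mul (fun _ => norm_nonneg _) (fun s => by
          simpa [dist_eq_norm] using hδ n s) r

theorem VolterraDominated.eqOn (hT : VolterraDominated ν T) {A : Set ℝ} (hA : ∀ᵐ s ∂ν, s ∈ A)
    {f g : ℝ → E} (hf : f ∈ boundedMeasurable E) (hg : g ∈ boundedMeasurable E)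
    (hTf : EqOn (T f) f A) (hTg : EqOn (T g) g A) : EqOn f g A := by
  obtain ⟨Cf, hCf⟩ := hf.2
  obtain ⟨Cg, hCg⟩ := hg.2
  set u : ℝ → ℝ := A.indicator fun r => ‖f r - g r‖
  have hu_nonneg : 0 ≤ u := indicator_nonneg fun _ _ => norm_nonneg _
  have hu_le : ∀ r, u r ≤ Cf + Cg := fun r =>
    (indicator_le_self' (fun _ _ => norm_nonneg _) r).trans
      ((norm_sub_le _ _).trans (add_le_add (hCf r) (hCg r)))
  have hu_int : ∀ r, u r ≤ ∫ s in Ioi r, u s ∂ν := by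
    intro r
    by_cases hr : r ∈ A
    · calc u r = ‖T f r - T g r‖ := by simp [u, hr, hTf hr, hTg hr]
        _ ≤ ∫ s in Ioi r, ‖f s - g s‖ ∂ν := hT f hf g hg r
        _ = ∫ s in Ioi r, u s ∂ν := integral_congr_ae
            (ae_restrict_of_ae (hA.mono fun s hs =>
              (indicator_of_mem hs fun r => ‖f r - g r‖).symm))
    · rw [show u r = 0 from indicator_of_notMem hr _]
      exact setIntegral_nonneg measurableSet_Ioi fun s _ => hu_nonneg s
  intro r hr
  have hlim : Tendsto (fun n => (Cf + Cg) * ν.real (Ioi r) ^ n / n !) atTop (𝓝 0) := by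
    simpa [mul_div_assoc] using
      (FloorSemiring.tendsto_pow_div_factorial_atTop _).const_mul (Cf + Cg)
  have hu_zero : u r ≤ 0 := ge_of_tendsto' hlim fun n =>
    le_mul_pow_div_factorial_of_le_setIntegral (d := fun _ => u) (fun _ => hu_nonneg) hu_le
      (fun _ => hu_int) n r
  have : ‖f r - g r‖ ≤ 0 := by simpa [u, hr] using hu_zero
  exact sub_eq_zero.1 (norm_le_zero_iff.1 this)

end Volterra

theorem measurable_setIntegral_Ioi {μ : Measure ℝ} [SFinite μ] {f : ℝ → ℝ} (hf : Measurable f) :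
    Measurable fun r => ∫ s in Ioi r, f s ∂μ := by
  have h : StronglyMeasurable (Function.uncurry fun r s => (Ioi r).indicator f s) :=
    ((hf.comp measurable_snd).indicator
      (measurableSet_lt measurable_fst measurable_snd)).stronglyMeasurable
  simpa only [integral_indicator measurableSet_Ioi] using h.integral_prod_right.measurable

theorem setIntegral_Ioi_restrict_Ioc (μ : Measure ℝ) (f : ℝ → ℝ) {a r : ℝ} (t : ℝ) (har : a ≤ r) :
    ∫ s in Ioi r, f s ∂(μ.restrict (Ioc a t)) = ∫ s in Ioc r t, f s ∂μ := by
  rw [Measure.restrict_restrict measurableSet_Ioi, inter_comm, Ioc_inter_Ioi, sup_eq_right.2 har]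

section BackwardOperator

variable {ι : Type*} [Fintype ι]

theorem integrable_apply_of_mem_boundedMeasurable {f : ℝ → ι → ℝ}
    (hf : f ∈ boundedMeasurable (ι → ℝ)) (μ : Measure ℝ) [IsFiniteMeasure μ] (j : ι) :
    Integrable (fun s => f s j) μ := by
  obtain ⟨C, hC⟩ := hf.2
  exact Integrable.of_bound ((measurable_pi_apply j).comp hf.1).aestronglyMeasurable C
    (Eventually.of_forall fun s => (norm_le_pi_norm (f s) j).trans (hC s))

noncomputable def backwardOp (σ : ι → ι) (lam : ι → ℝ) (μ μp μn : ι → Measure ℝ)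
    (f : ℝ → ι → ℝ) (r : ℝ) (i : ι) : ℝ :=
  lam i + (∫ s in Ioi r, f s (σ i) ∂μ i) -
    ((∫ s in Ioi r, f s i ∂μp i) - ∫ s in Ioi r, f s i ∂μn i)

variable (σ : ι → ι) (lam : ι → ℝ) {μ μp μn : ι → Measure ℝ}
  [∀ i, IsFiniteMeasure (μ i)] [∀ i, IsFiniteMeasure (μp i)] [∀ i, IsFiniteMeasure (μn i)]

theorem volterraDominated_backwardOp :
    VolterraDominated (∑ i, (μ i + μp i + μn i)) (backwardOp σ lam μ μp μn) := by
  intro f hf g hg r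
  obtain ⟨Cf, hCf⟩ := hf.2
  obtain ⟨Cg, hCg⟩ := hg.2
  set w : ℝ → ℝ := fun s => ‖f s - g s‖
  have hw_int : ∀ (m : Measure ℝ) [IsFiniteMeasure m], Integrable w m := fun m _ =>
    Integrable.of_bound (hf.1.sub hg.1).norm.aestronglyMeasurable (Cf + Cg)
      (Eventually.of_forall fun s => by
        rw [norm_norm]
        exact (norm_sub_le _ _).trans (add_le_add (hCf s) (hCg s)))
  have hcomp : ∀ (m : Measure ℝ) [IsFiniteMeasure m] (j : ι),
      |(∫ s in Ioi r, f s j ∂m) - ∫ s in Ioi r, g s j ∂m| ≤ ∫ s in Ioi r, w s ∂m := by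
    intro m _ j
    rw [← integral_sub (integrable_apply_of_mem_boundedMeasurable hf _ j)
      (integrable_apply_of_mem_boundedMeasurable hg _ j)]
    exact norm_integral_le_of_norm_le (hw_int _)
      (Eventually.of_forall fun s => norm_le_pi_norm (f s - g s) j)
  refine (pi_norm_le_iff_of_nonneg
    (setIntegral_nonneg measurableSet_Ioi fun _ _ => norm_nonneg _)).2 fun i => ?_
  rw [Real.norm_eq_abs]
  calc |backwardOp σ lam μ μp μn f r i - backwardOp σ lam μ μp μn g r i|
      = |((∫ s in Ioi r, f s (σ i) ∂μ i) - ∫ s in Ioi r, g s (σ i) ∂μ i) -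
          (((∫ s in Ioi r, f s i ∂μp i) - ∫ s in Ioi r, g s i ∂μp i) -
            ((∫ s in Ioi r, f s i ∂μn i) - ∫ s in Ioi r, g s i ∂μn i))| := by
        simp only [backwardOp]
        ring_nf
    _ ≤ (∫ s in Ioi r, w s ∂μ i) + ((∫ s in Ioi r, w s ∂μp i) + ∫ s in Ioi r, w s ∂μn i) :=
        (abs_sub _ _).trans (add_le_add (hcomp _ _) ((abs_sub _ _).trans
          (add_le_add (hcomp _ _) (hcomp _ _))))
    _ = ∫ s in Ioi r, w s ∂(μ i + μp i + μn i) := by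
        rw [Measure.restrict_add, Measure.restrict_add, integral_add_measure, integral_add_measure,
          add_assoc] <;> fun_prop
    _ ≤ ∫ s in Ioi r, w s ∂(∑ j, (μ j + μp j + μn j)) :=
        integral_mono_measure
          (Measure.restrict_mono subset_rfl (Finset.single_le_sum
            (f := fun j => μ j + μp j + μn j) (fun j _ => Measure.zero_le _) (Finset.mem_univ i)))
          (Eventually.of_forall fun _ => norm_nonneg _) (hw_int _)

theorem mapsTo_backwardOp :
    MapsTo (backwardOp σ lam μ μp μn) (boundedMeasurable (ι → ℝ)) (boundedMeasurable (ι → ℝ)) := by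
  refine (volterraDominated_backwardOp σ lam).mapsTo (fun f hf => ?_) ⟨‖lam‖, fun r =>
    (congrArg norm (funext fun i => by simp [backwardOp])).le⟩
  have hcomp : ∀ j, Measurable fun s => f s j := fun j => (measurable_pi_apply j).comp hf.1
  exact measurable_pi_lambda _ fun i => (measurable_const.add
    (measurable_setIntegral_Ioi (hcomp _))).sub
      ((measurable_setIntegral_Ioi (hcomp i)).sub (measurable_setIntegral_Ioi (hcomp i)))

end BackwardOperator

section BackwardSystem

variable {ι : Type*} {σ : ι → ι} {lam : ι → ℝ} {μ μp μn : ι → Measure ℝ} {t : ℝ}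

def IsBackwardSolution (σ : ι → ι) (lam : ι → ℝ) (μ μp μn : ι → Measure ℝ) (t : ℝ)
    (u : ι → ℝ → ℝ) : Prop :=
  (∀ i, Measurable (u i)) ∧ (∃ C, ∀ i, ∀ r ∈ Icc (0 : ℝ) t, |u i r| ≤ C) ∧
    ∀ i, ∀ r ∈ Icc (0 : ℝ) t, u i r = lam i + (∫ s in Ioc r t, u (σ i) s ∂μ i) -
      ((∫ s in Ioc r t, u i s ∂μp i) - ∫ s in Ioc r t, u i s ∂μn i)

-- With the measures restricted to `(0, t]`, integrating over `(r, ∞)` reproduces the integrals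
-- over `(r, t]` on `[0, t]` and gives an operator defined for every `r`.
theorem backwardOp_restrict_Ioc_apply (f : ℝ → ι → ℝ) {r : ℝ} (hr : 0 ≤ r) (i : ι) :
    backwardOp σ lam (fun i => (μ i).restrict (Ioc 0 t)) (fun i => (μp i).restrict (Ioc 0 t))
      (fun i => (μn i).restrict (Ioc 0 t)) f r i =
    lam i + (∫ s in Ioc r t, f s (σ i) ∂μ i) -
      ((∫ s in Ioc r t, f s i ∂μp i) - ∫ s in Ioc r t, f s i ∂μn i) := by
  simp only [backwardOp, setIntegral_Ioi_restrict_Ioc _ _ t hr]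

theorem IsBackwardSolution.eqOn_backwardOp_indicator {u : ι → ℝ → ℝ}
    (hu : IsBackwardSolution σ lam μ μp μn t u) :
    EqOn (backwardOp σ lam (fun i => (μ i).restrict (Ioc 0 t))
      (fun i => (μp i).restrict (Ioc 0 t)) (fun i => (μn i).restrict (Ioc 0 t))
      ((Icc 0 t).indicator fun r i => u i r)) ((Icc 0 t).indicator fun r i => u i r) (Icc 0 t) := by
  intro r hr
  ext i
  have hIoc : ∀ (m : Measure ℝ) j, ∫ s in Ioc r t, (Icc 0 t).indicator (fun r i => u i r) s j ∂m =
      ∫ s in Ioc r t, u j s ∂m := fun m j => setIntegral_congr_fun measurableSet_Ioc fun s hs => by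
    simp [indicator_of_mem (show s ∈ Icc 0 t from ⟨hr.1.trans hs.1.le, hs.2⟩)]
  rw [backwardOp_restrict_Ioc_apply _ hr.1, indicator_of_mem hr, hu.2.2 i r hr,
    hIoc, hIoc, hIoc]

variable [Fintype ι]

theorem IsBackwardSolution.indicator_mem_boundedMeasurable {u : ι → ℝ → ℝ}
    (hu : IsBackwardSolution σ lam μ μp μn t u) :
    (Icc 0 t).indicator (fun r i => u i r) ∈ boundedMeasurable (ι → ℝ) := by
  obtain ⟨hmeas, ⟨C, hC⟩, -⟩ := hu
  refine ⟨(measurable_pi_lambda _ hmeas).indicator measurableSet_Icc, max C 0, fun r => ?_⟩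
  by_cases hr : r ∈ Icc 0 t
  · rw [indicator_of_mem hr, pi_norm_le_iff_of_nonneg (le_max_right _ _)]
    exact fun i => (hC i r hr).trans (le_max_left _ _)
  · simp [hr]

theorem exists_isBackwardSolution_eqOn [∀ i, IsLocallyFiniteMeasure (μ i)]
    [∀ i, IsLocallyFiniteMeasure (μp i)] [∀ i, IsLocallyFiniteMeasure (μn i)] :
    ∃ u, IsBackwardSolution σ lam μ μp μn t u ∧
      ∀ v, IsBackwardSolution σ lam μ μp μn t v → ∀ i, EqOn (v i) (u i) (Icc 0 t) := by
  have hfin : ∀ (m : Measure ℝ) [IsLocallyFiniteMeasure m],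
      IsFiniteMeasure (m.restrict (Ioc 0 t)) :=
    fun m _ => isFiniteMeasure_restrict.2 measure_Ioc_lt_top.ne
  have := fun i => hfin (μ i)
  have := fun i => hfin (μp i)
  have := fun i => hfin (μn i)
  have hT := volterraDominated_backwardOp σ lam (μ := fun i => (μ i).restrict (Ioc 0 t))
    (μp := fun i => (μp i).restrict (Ioc 0 t)) (μn := fun i => (μn i).restrict (Ioc 0 t))
  obtain ⟨p, hp, hTp⟩ := hT.exists_fixedPoint (mapsTo_backwardOp σ lam)
  obtain ⟨C, hC⟩ := hp.2
  refine ⟨fun i r => p r i, ⟨fun i => (measurable_pi_apply i).comp hp.1,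
    ⟨C, fun i r _ => (norm_le_pi_norm (p r) i).trans (hC r)⟩, fun i r hr => ?_⟩,
    fun v hv i r hr => ?_⟩
  · conv_lhs => rw [← hTp]
    exact backwardOp_restrict_Ioc_apply p hr.1 i
  have hconc : ∀ᵐ s ∂(∑ i, ((μ i).restrict (Ioc 0 t) + (μp i).restrict (Ioc 0 t) +
      (μn i).restrict (Ioc 0 t))), s ∈ Icc 0 t := by
    have hout : {s | s ∉ Icc (0 : ℝ) t} ∩ Ioc 0 t = ∅ :=
      eq_empty_of_forall_notMem fun s hs => hs.1 (Ioc_subset_Icc_self hs.2)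
    rw [ae_iff]
    simp only [Measure.coe_finsetSum, Finset.sum_apply, Measure.coe_add, Pi.add_apply,
      Measure.restrict_apply' measurableSet_Ioc, hout, measure_empty, add_zero,
      Finset.sum_const_zero]
  have h := hT.eqOn hconc hv.indicator_mem_boundedMeasurable hp hv.eqOn_backwardOp_indicator
    (fun r _ => congrFun hTp r) hr
  simpa [hr] using congrFun h i

end BackwardSystem

theorem stmt7_general (t : ℝ) (lam : Fin 2 → ℝ)
    (bbar : Fin 2 → Fin 2 → StieltjesFunction ℝ)
    (bp bn : Fin 2 → StieltjesFunction ℝ) :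
    ∃ p : Fin 2 → ℝ → ℝ,
      ((∀ i, Measurable (p i)) ∧
       (∃ C, ∀ i, ∀ r ∈ Set.Icc (0 : ℝ) t, |p i r| ≤ C) ∧
       (∀ i j : Fin 2, i ≠ j → ∀ r ∈ Set.Icc (0 : ℝ) t,
         p i r = lam i + (∫ s in Set.Ioc r t, p j s ∂(bbar i j).measure) -
           ((∫ s in Set.Ioc r t, p i s ∂(bp i).measure) -
             ∫ s in Set.Ioc r t, p i s ∂(bn i).measure))) ∧
      ∀ q : Fin 2 → ℝ → ℝ,
        ((∀ i, Measurable (q i)) ∧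
         (∃ C, ∀ i, ∀ r ∈ Set.Icc (0 : ℝ) t, |q i r| ≤ C) ∧
         (∀ i j : Fin 2, i ≠ j → ∀ r ∈ Set.Icc (0 : ℝ) t,
           q i r = lam i + (∫ s in Set.Ioc r t, q j s ∂(bbar i j).measure) -
             ((∫ s in Set.Ioc r t, q i s ∂(bp i).measure) -
               ∫ s in Set.Ioc r t, q i s ∂(bn i).measure))) →
        ∀ i, ∀ r ∈ Set.Icc (0 : ℝ) t, q i r = p i r := by
  have hpartner : ∀ i j : Fin 2, i ≠ j → j = i.rev := by decide
  have hrev : ∀ i : Fin 2, i ≠ i.rev := by decide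
  obtain ⟨p, ⟨hp_meas, hp_bdd, hp⟩, huniq⟩ := exists_isBackwardSolution_eqOn (σ := Fin.rev)
    (lam := lam) (μ := fun i => (bbar i i.rev).measure) (μp := fun i => (bp i).measure)
    (μn := fun i => (bn i).measure) (t := t)
  refine ⟨p, ⟨hp_meas, hp_bdd, fun i j hij r hr => ?_⟩, fun q ⟨hq_meas, hq_bdd, hq⟩ i r hr =>
    huniq q ⟨hq_meas, hq_bdd, fun i => hq i i.rev (hrev i)⟩ i hr⟩
  obtain rfl := hpartner i j hij
  exact hp i r hr

/-- existence and uniqueness of the bounded solution to the two-type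
linear (first-moment) backward system. With `b i i` of locally bounded variation
represented as `bp i - bn i` for Stieltjes functions `bp i, bn i`, and `bbar i j`
(`i ≠ j`) increasing right continuous with `bbar i j 0 = 0`: for any `t ≥ 0` and
`λ ∈ ℝ²` there exists a bounded measurable solution on `[0,t]` of
`π i r = λ i + ∫_{(r,t]} π j dbbar i j − ∫_{(r,t]} π i db i i`, unique on `[0,t]`. -/
theorem stmt7 (t : ℝ) (ht : 0 ≤ t) (lam : Fin 2 → ℝ)
    (bbar : Fin 2 → Fin 2 → StieltjesFunction ℝ)
    (hbbar0 : ∀ i j : Fin 2, i ≠ j → bbar i j 0 = 0)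
    (bp bn : Fin 2 → StieltjesFunction ℝ)
    (hb0 : ∀ i, bp i 0 - bn i 0 = 0) :
    ∃ p : Fin 2 → ℝ → ℝ,
      ((∀ i, Measurable (p i)) ∧
       (∃ C, ∀ i, ∀ r ∈ Set.Icc (0 : ℝ) t, |p i r| ≤ C) ∧
       (∀ i j : Fin 2, i ≠ j → ∀ r ∈ Set.Icc (0 : ℝ) t,
         p i r = lam i + (∫ s in Set.Ioc r t, p j s ∂(bbar i j).measure) -
           ((∫ s in Set.Ioc r t, p i s ∂(bp i).measure) -
             ∫ s in Set.Ioc r t, p i s ∂(bn i).measure))) ∧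
      ∀ q : Fin 2 → ℝ → ℝ,
        ((∀ i, Measurable (q i)) ∧
         (∃ C, ∀ i, ∀ r ∈ Set.Icc (0 : ℝ) t, |q i r| ≤ C) ∧
         (∀ i j : Fin 2, i ≠ j → ∀ r ∈ Set.Icc (0 : ℝ) t,
           q i r = lam i + (∫ s in Set.Ioc r t, q j s ∂(bbar i j).measure) -
             ((∫ s in Set.Ioc r t, q i s ∂(bp i).measure) -
               ∫ s in Set.Ioc r t, q i s ∂(bn i).measure))) →
        ∀ i, ∀ r ∈ Set.Icc (0 : ℝ) t, q i r = p i r :=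
  stmt7_general t lam bbar bp bn
end

section
/- A priori bound for positive solutions: if v : [0,t] → ℝ₊² is a bounded solution of the backward system v_i(r) ≤ λ_i + ∫_{(r,t]} v_i(s) ‖b_ii‖(ds) + ∫_{(r,t]} v_j(s) b̄_ij(ds) (which any positive solution of the full backward equation satisfies), then v_i(r) ≤ ‖λ‖ (1 + b̄_ij(t)) exp( e^{‖b_jj‖(t)} b̄_12(t) b̄_21(t) + ‖b_11‖(t) + ‖b_22‖(t) ) for all r ∈ [0,t]. -/
/-!
Backward Gronwall for a Stieltjes measure `df`: if `0 ≤ v ≤ a + ∫_{(r,t]} v df` with `v` bounded,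
then `v r ≤ a * exp (f t - f r)`. The exponential is a supersolution, i.e.
`∫_{(r,t]} exp (f t - f s) df(s) ≤ exp (f t - f r) - 1`; by the layer-cake formula this reduces to
the sublevel sets `{s ∈ (r,t] | f s < y}` having `df`-measure at most `y - f r`, an initial
segment of `(r,t]` whose measure is controlled by the left limit of `f` at its supremum.

For the system, Gronwall applied to the `j`-th inequality bounds `v j s` by
`(λ_j + ∫_{(s,t]} v_i db̄_ji) e^{‖b_jj‖(t)}`. Substituting this into the `i`-th inequality gives
a closed inequality for `v i` with respect to `‖b_ii‖ + e^{‖b_jj‖(t)} b̄_ij(t) · b̄_ji`, and a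
second application of Gronwall gives the bound.
-/

open Real MeasureTheory Set

theorem integral_sub_mul_exp (g : ℝ) :
    ∫ y in (0)..g, (g - y) * exp y = exp g - 1 - g := by
  have hderiv : ∀ y ∈ uIcc 0 g,
      HasDerivAt (fun y => (g + 1 - y) * exp y) ((g - y) * exp y) y := fun y _ =>
    ((hasDerivAt_id' y).const_sub (g + 1)).fun_mul (hasDerivAt_exp y) |>.congr_deriv (by ring)
  rw [intervalIntegral.integral_eq_sub_of_hasDerivAt hderiv
    ((by fun_prop : Continuous fun y => (g - y) * exp y).intervalIntegrable _ _)]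
  simp only [add_sub_cancel_left, one_mul, sub_zero, exp_zero, mul_one]; ring

theorem lintegral_Ioi_ofReal_sub_mul_exp {g : ℝ} (hg : 0 ≤ g) :
    ∫⁻ y in Ioi 0, ENNReal.ofReal ((g - y) * exp y) = ENNReal.ofReal (exp g - 1 - g) := by
  have hzero : ∫⁻ y in Ioi g, ENNReal.ofReal ((g - y) * exp y) = 0 := by
    rw [setLIntegral_congr_fun measurableSet_Ioi fun y (hy : g < y) =>
      ENNReal.ofReal_eq_zero.2 (mul_nonpos_of_nonpos_of_nonneg (by linarith) (exp_pos y).le)]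
    exact lintegral_zero
  rw [← Ioc_union_Ioi_eq_Ioi hg, lintegral_union measurableSet_Ioi Ioc_disjoint_Ioi_same, hzero,
    add_zero, ← ofReal_integral_eq_lintegral_ofReal, ← intervalIntegral.integral_of_le hg,
    integral_sub_mul_exp]
  · exact (by fun_prop : Continuous fun y => (g - y) * exp y).integrableOn_Ioc
  · exact ae_restrict_of_forall_mem measurableSet_Ioc fun y hy =>
      mul_nonneg (by linarith [hy.2]) (exp_pos y).le

theorem integrableOn_Ioc_of_nonneg_of_bddAbove {μ : Measure ℝ} [IsLocallyFiniteMeasure μ]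
    {u : ℝ → ℝ} {c t : ℝ} (hu : Measurable u) (hu0 : ∀ r ∈ Icc c t, 0 ≤ u r)
    (hu_bdd : BddAbove (u '' Icc c t)) : IntegrableOn u (Ioc c t) μ := by
  obtain ⟨C, hC⟩ := hu_bdd
  refine Measure.integrableOn_of_bounded (M := C) measure_Ioc_lt_top.ne hu.aestronglyMeasurable
    (ae_restrict_of_forall_mem measurableSet_Ioc fun s hs => ?_)
  have hs' : s ∈ Icc c t := Ioc_subset_Icc_self hs
  rw [norm_of_nonneg (hu0 s hs')]
  exact hC ⟨s, hs', rfl⟩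

theorem add_mul_mul_exp_le {α β L b p Y : ℝ} (hα : α ≤ L) (hβ : β ≤ L) (hL : 0 ≤ L) (hb : 0 ≤ b)
    (hp : 0 ≤ p) : (α + exp b * β * p) * exp Y ≤ L * (1 + p) * exp (Y + b) := by
  have hα' : α ≤ L * exp b := hα.trans (le_mul_of_one_le_right hL (one_le_exp hb))
  have hβ' : exp b * β * p ≤ exp b * L * p := by gcongr
  calc (α + exp b * β * p) * exp Y ≤ (L * exp b + exp b * L * p) * exp Y := by
        gcongr
    _ = L * (1 + p) * exp (Y + b) := by rw [exp_add]; ring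

namespace StieltjesFunction

variable (f : StieltjesFunction ℝ)

theorem measure_sublevel_Ioc_le (r t y : ℝ) :
    f.measure {s ∈ Ioc r t | f s < y} ≤ ENNReal.ofReal (y - f r) := by
  set S := {s ∈ Ioc r t | f s < y}
  rcases S.eq_empty_or_nonempty with hS | hS
  · simp [hS]
  have hbdd : BddAbove S := ⟨t, fun s hs => hs.1.2⟩
  by_cases hu : sSup S ∈ S
  · calc f.measure S ≤ f.measure (Ioc r (sSup S)) :=
          measure_mono fun s hs => ⟨hs.1.1, le_csSup hbdd hs⟩
      _ ≤ _ := by rw [measure_Ioc]; exact ENNReal.ofReal_le_ofReal (by linarith [hu.2])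
  · have hlim : Function.leftLim f (sSup S) ≤ y := by
      rw [f.mono.leftLim_eq_sSup]
      refine csSup_le (nonempty_Iio.image f) ?_
      rintro _ ⟨s, hs, rfl⟩
      obtain ⟨s', hs', hss'⟩ := exists_lt_of_lt_csSup hS hs
      exact (f.mono hss'.le).trans hs'.2.le
    calc f.measure S ≤ f.measure (Ioo r (sSup S)) :=
          measure_mono fun s hs => ⟨hs.1.1, (le_csSup hbdd hs).lt_of_ne fun h => hu (h ▸ hs)⟩
      _ ≤ _ := by rw [measure_Ioo]; exact ENNReal.ofReal_le_ofReal (by linarith)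

theorem lintegral_exp_sub_one_le {r t : ℝ} (hrt : r ≤ t) :
    ∫⁻ s in Ioc r t, ENNReal.ofReal (exp (f t - f s) - 1) ∂f.measure ≤
      ENNReal.ofReal (exp (f t - f r) - 1 - (f t - f r)) := by
  have hφ : ∀ᵐ s ∂f.measure.restrict (Ioc r t), 0 ≤ f t - f s :=
    ae_restrict_of_forall_mem measurableSet_Ioc fun s hs => sub_nonneg.2 (f.mono hs.2)
  have hlayer := lintegral_comp_eq_lintegral_meas_lt_mul _ hφ
    (measurable_const.sub f.mono.measurable).aemeasurable
    (fun _ _ => continuous_exp.intervalIntegrable _ _) (ae_of_all _ fun y => (exp_pos y).le)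
  simp only [integral_exp, exp_zero] at hlayer
  rw [hlayer, ← lintegral_Ioi_ofReal_sub_mul_exp (sub_nonneg.2 (f.mono hrt))]
  refine lintegral_mono fun y => ?_
  rw [ENNReal.ofReal_mul' (exp_pos y).le, Measure.restrict_apply' measurableSet_Ioc]
  gcongr
  calc f.measure ({s | y < f t - f s} ∩ Ioc r t)
      _ ≤ f.measure {s ∈ Ioc r t | f s < f t - y} :=
        measure_mono fun s hs => ⟨hs.2, by linarith [hs.1.out]⟩
      _ ≤ ENNReal.ofReal (f t - y - f r) := f.measure_sublevel_Ioc_le r t (f t - y)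
      _ = ENNReal.ofReal (f t - f r - y) := by ring_nf

theorem measureReal_Ioc {r t : ℝ} (hrt : r ≤ t) : f.measure.real (Ioc r t) = f t - f r := by
  rw [measureReal_def, measure_Ioc, ENNReal.toReal_ofReal (sub_nonneg.2 (f.mono hrt))]

theorem integrableOn_exp_sub (r t : ℝ) :
    IntegrableOn (fun s => exp (f t - f s)) (Ioc r t) f.measure := by
  refine Measure.integrableOn_of_bounded (M := exp (f t - f r)) measure_Ioc_lt_top.ne
    (measurable_const.sub f.mono.measurable).exp.aestronglyMeasurable ?_
  refine ae_restrict_of_forall_mem measurableSet_Ioc fun s hs => ?_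
  rw [norm_of_nonneg (exp_pos _).le]
  exact exp_le_exp.2 (by linarith [f.mono hs.1.le])

theorem setIntegral_exp_sub_le {r t : ℝ} (hrt : r ≤ t) :
    ∫ s in Ioc r t, exp (f t - f s) ∂f.measure ≤ exp (f t - f r) - 1 := by
  have hsplit : ∫ s in Ioc r t, exp (f t - f s) ∂f.measure =
      ∫ s in Ioc r t, (exp (f t - f s) - 1) ∂f.measure + (f t - f r) := by
    rw [integral_sub (f.integrableOn_exp_sub r t) (integrableOn_const measure_Ioc_lt_top.ne),
      setIntegral_const, f.measureReal_Ioc hrt, smul_eq_mul, mul_one, sub_add_cancel]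
  have hnonneg : ∀ᵐ s ∂f.measure.restrict (Ioc r t), 0 ≤ exp (f t - f s) - 1 :=
    ae_restrict_of_forall_mem measurableSet_Ioc fun s hs =>
      sub_nonneg.2 (one_le_exp (sub_nonneg.2 (f.mono hs.2)))
  have hbound : ∫ s in Ioc r t, (exp (f t - f s) - 1) ∂f.measure ≤
      exp (f t - f r) - 1 - (f t - f r) := by
    rw [integral_eq_lintegral_of_nonneg_ae hnonneg ((f.integrableOn_exp_sub r t).sub
      (integrableOn_const measure_Ioc_lt_top.ne)).aestronglyMeasurable]
    refine ENNReal.toReal_le_of_le_ofReal ?_ (f.lintegral_exp_sub_one_le hrt)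
    linarith [add_one_le_exp (f t - f r)]
  linarith

theorem le_mul_exp_of_le_add_setIntegral {v : ℝ → ℝ} {a c t : ℝ}
    (hv0 : ∀ r ∈ Icc c t, 0 ≤ v r) (hv_bdd : BddAbove (v '' Icc c t))
    (h : ∀ r ∈ Icc c t, v r ≤ a + ∫ s in Ioc r t, v s ∂f.measure) :
    ∀ r ∈ Icc c t, v r ≤ a * exp (f t - f r) := by
  intro r hr
  have hct : c ≤ t := hr.1.trans hr.2
  set E : ℝ → ℝ := fun s => exp (f t - f s)
  have hE1 : ∀ s ∈ Icc c t, 1 ≤ E s := fun s hs => one_le_exp (sub_nonneg.2 (f.mono hs.2))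
  have hbdd : BddAbove ((fun s => v s / E s) '' Icc c t) := by
    obtain ⟨C, hC⟩ := hv_bdd
    refine ⟨C, ?_⟩
    rintro _ ⟨s, hs, rfl⟩
    exact (div_le_self (hv0 s hs) (hE1 s hs)).trans (hC ⟨s, hs, rfl⟩)
  set M := sSup ((fun s => v s / E s) '' Icc c t)
  have hle_M : ∀ s ∈ Icc c t, v s ≤ M * E s := fun s hs =>
    (div_le_iff₀ (exp_pos _)).1 (le_csSup hbdd ⟨s, hs, rfl⟩)
  have hM0 : 0 ≤ M :=
    (div_nonneg (hv0 c ⟨le_rfl, hct⟩) (exp_pos _).le).trans (le_csSup hbdd ⟨c, ⟨le_rfl, hct⟩, rfl⟩)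
  have hstep : ∀ s ∈ Icc c t, v s ≤ a + M * (E s - 1) := by
    intro s hs
    have hint : ∫ u in Ioc s t, v u ∂f.measure ≤ ∫ u in Ioc s t, M * E u ∂f.measure :=
      integral_mono_of_nonneg
        (ae_restrict_of_forall_mem measurableSet_Ioc fun u hu => hv0 u ⟨hs.1.trans hu.1.le, hu.2⟩)
        ((f.integrableOn_exp_sub s t).const_mul M)
        (ae_restrict_of_forall_mem measurableSet_Ioc fun u hu => hle_M u ⟨hs.1.trans hu.1.le, hu.2⟩)
    rw [integral_const_mul] at hint
    linarith [h s hs, mul_le_mul_of_nonneg_left (f.setIntegral_exp_sub_le hs.2) hM0]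
  -- Feeding `v ≤ M * E` back into `h` would improve `M` to `M - (M - a) / E c`.
  have hMa : M ≤ a := by
    by_contra! haM
    have hM_le : M ≤ M - (M - a) / E c := by
      refine csSup_le (nonempty_Icc.2 hct |>.image _) ?_
      rintro _ ⟨s, hs, rfl⟩
      have hEs : 0 < E s := exp_pos _
      have hmono : (M - a) / E c ≤ (M - a) / E s :=
        div_le_div_of_nonneg_left (by linarith) hEs (exp_le_exp.2 (by linarith [f.mono hs.1]))
      calc v s / E s ≤ (a + M * (E s - 1)) / E s := by gcongr; exact hstep s hs
        _ = M - (M - a) / E s := by field_simp; ring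
        _ ≤ M - (M - a) / E c := by linarith
    linarith [div_pos (sub_pos.2 haM) (exp_pos (f t - f c))]
  exact (hle_M r hr).trans (mul_le_mul_of_nonneg_right hMa (exp_pos _).le)

end StieltjesFunction

theorem le_mul_exp_of_coupled_le_add_setIntegral {c t α β : ℝ} {F G P Q : StieltjesFunction ℝ}
    {u w : ℝ → ℝ} (hα : 0 ≤ α) (hβ : 0 ≤ β) (hu_meas : Measurable u)
    (hu0 : ∀ r ∈ Icc c t, 0 ≤ u r) (hw0 : ∀ r ∈ Icc c t, 0 ≤ w r)
    (hu_bdd : BddAbove (u '' Icc c t)) (hw_bdd : BddAbove (w '' Icc c t))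
    (hu : ∀ r ∈ Icc c t,
      u r ≤ α + ∫ s in Ioc r t, u s ∂F.measure + ∫ s in Ioc r t, w s ∂P.measure)
    (hw : ∀ r ∈ Icc c t,
      w r ≤ β + ∫ s in Ioc r t, w s ∂G.measure + ∫ s in Ioc r t, u s ∂Q.measure) :
    ∀ r ∈ Icc c t, u r ≤ (α + exp (G t - G c) * β * (P t - P c)) *
      exp (F t - F c + exp (G t - G c) * (P t - P c) * (Q t - Q c)) := by
  intro r hr
  have hct : c ≤ t := hr.1.trans hr.2
  have hint : ∀ (μ : Measure ℝ) [IsLocallyFiniteMeasure μ] (x : ℝ), c ≤ x →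
      IntegrableOn u (Ioc x t) μ := fun μ _ x hx =>
    (integrableOn_Ioc_of_nonneg_of_bddAbove hu_meas hu0 hu_bdd).mono_set (Ioc_subset_Ioc_left hx)
  set I : ℝ → ℝ := fun x => ∫ s in Ioc x t, u s ∂Q.measure
  have hI_anti : ∀ x y, c ≤ y → y ≤ x → I x ≤ I y := fun x y hy hyx =>
    setIntegral_mono_set (hint _ y hy)
      (ae_restrict_of_forall_mem measurableSet_Ioc fun s hs => hu0 s ⟨hy.trans hs.1.le, hs.2⟩)
      (Ioc_subset_Ioc_left hyx).eventuallyLE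
  have hI0 : ∀ x ∈ Icc c t, 0 ≤ I x := fun x hx =>
    setIntegral_nonneg measurableSet_Ioc fun s hs => hu0 s ⟨hx.1.trans hs.1.le, hs.2⟩
  have hw_le : ∀ x ∈ Icc c t, w x ≤ (β + I x) * exp (G t - G x) := fun x hx =>
    G.le_mul_exp_of_le_add_setIntegral (fun y hy => hw0 y ⟨hx.1.trans hy.1, hy.2⟩)
      (hw_bdd.mono (image_mono (Icc_subset_Icc_left hx.1)))
      (fun y hy => (hw y ⟨hx.1.trans hy.1, hy.2⟩).trans
        (by linarith [hI_anti y x hx.1 hy.1])) x ⟨le_rfl, hx.2⟩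
  set k := exp (G t - G c) * (P t - P c)
  have hk0 : 0 ≤ k := mul_nonneg (exp_pos _).le (sub_nonneg.2 (P.mono hct))
  have hwP : ∀ x ∈ Icc c t, ∫ s in Ioc x t, w s ∂P.measure ≤ k * (β + I x) := by
    intro x hx
    have hpoint : ∀ s ∈ Ioc x t, w s ≤ (β + I x) * exp (G t - G c) := fun s hs => by
      have hs' : s ∈ Icc c t := ⟨hx.1.trans hs.1.le, hs.2⟩
      refine (hw_le s hs').trans (mul_le_mul ?_ ?_ (exp_pos _).le (by linarith [hI0 x hx]))
      · linarith [hI_anti s x hx.1 hs.1.le]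
      · exact exp_le_exp.2 (by linarith [G.mono hs'.1])
    calc ∫ s in Ioc x t, w s ∂P.measure
        ≤ ∫ _ in Ioc x t, (β + I x) * exp (G t - G c) ∂P.measure :=
          integral_mono_of_nonneg
            (ae_restrict_of_forall_mem measurableSet_Ioc fun s hs =>
              hw0 s ⟨hx.1.trans hs.1.le, hs.2⟩)
            (integrableOn_const measure_Ioc_lt_top.ne)
            (ae_restrict_of_forall_mem measurableSet_Ioc hpoint)
      _ = exp (G t - G c) * (P t - P x) * (β + I x) := by
          rw [setIntegral_const, P.measureReal_Ioc hx.2, smul_eq_mul]; ring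
      _ ≤ k * (β + I x) :=
          mul_le_mul_of_nonneg_right (mul_le_mul_of_nonneg_left (by linarith [P.mono hx.1])
            (exp_pos _).le) (by linarith [hI0 x hx])
  set κ : StieltjesFunction ℝ := F + k.toNNReal • Q
  have hκ : ∀ x ∈ Icc c t, u x ≤ (α + k * β) + ∫ s in Ioc x t, u s ∂κ.measure := by
    intro x hx
    have hsplit : ∫ s in Ioc x t, u s ∂κ.measure =
        ∫ s in Ioc x t, u s ∂F.measure + k * I x := by
      rw [StieltjesFunction.measure_add, StieltjesFunction.measure_smul, Measure.restrict_add,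
        Measure.restrict_smul,
        integral_add_measure (hint _ x hx.1) (hint _ x hx.1).smul_measure_nnreal,
        integral_smul_nnreal_measure, NNReal.smul_def, Real.coe_toNNReal _ hk0, smul_eq_mul]
    linarith [hu x hx, hwP x hx]
  have hκ_incr : κ t - κ r ≤ F t - F c + k * (Q t - Q c) := by
    show F t + k.toNNReal * Q t - (F r + k.toNNReal * Q r) ≤ _
    rw [Real.coe_toNNReal _ hk0]
    linarith [F.mono hr.1, mul_le_mul_of_nonneg_left (Q.mono hr.1) hk0]
  calc u r ≤ (α + k * β) * exp (κ t - κ r) :=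
        κ.le_mul_exp_of_le_add_setIntegral hu0 hu_bdd hκ r hr
    _ ≤ (α + k * β) * exp (F t - F c + k * (Q t - Q c)) := by gcongr
    _ = _ := by simp only [k]; ring

-- `bp i - bn i` plays the role of `b i i`, and `(bp i t - bp i 0) + (bn i t - bn i 0)` that of
-- its total variation `‖b i i‖(t)`.
theorem stmt8_general (t : ℝ) (lam : Fin 2 → ℝ) (hlam : ∀ i, 0 ≤ lam i)
    (bbar : Fin 2 → Fin 2 → StieltjesFunction ℝ)
    (hbbar0 : ∀ i j : Fin 2, i ≠ j → bbar i j 0 = 0)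
    (bp bn : Fin 2 → StieltjesFunction ℝ)
    (v : Fin 2 → ℝ → ℝ)
    (hv_meas : ∀ i, Measurable (v i))
    (hv_nonneg : ∀ i, ∀ r ∈ Set.Icc (0 : ℝ) t, 0 ≤ v i r)
    (hv_bdd : ∃ C, ∀ i, ∀ r ∈ Set.Icc (0 : ℝ) t, |v i r| ≤ C)
    (hineq : ∀ i j : Fin 2, i ≠ j → ∀ r ∈ Set.Icc (0 : ℝ) t,
      v i r ≤ lam i +
        ((∫ s in Set.Ioc r t, v i s ∂(bp i).measure) +
          ∫ s in Set.Ioc r t, v i s ∂(bn i).measure) +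
        ∫ s in Set.Ioc r t, v j s ∂(bbar i j).measure) :
    ∀ i j : Fin 2, i ≠ j → ∀ r ∈ Set.Icc (0 : ℝ) t,
      v i r ≤
        Real.sqrt (lam 0 ^ 2 + lam 1 ^ 2) * (1 + bbar i j t) *
          Real.exp
            (Real.exp ((bp j t - bp j 0) + (bn j t - bn j 0)) *
                (bbar 0 1 t * bbar 1 0 t) +
              ((bp 0 t - bp 0 0) + (bn 0 t - bn 0 0)) +
              ((bp 1 t - bp 1 0) + (bn 1 t - bn 1 0))) := by
  obtain ⟨C, hC⟩ := hv_bdd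
  have hbdd : ∀ k, BddAbove (v k '' Icc 0 t) := fun k =>
    ⟨C, by rintro _ ⟨r, hr, rfl⟩; exact (le_abs_self _).trans (hC k r hr)⟩
  have hsys : ∀ i j : Fin 2, i ≠ j → ∀ r ∈ Icc 0 t, v i r ≤ lam i +
      ∫ s in Ioc r t, v i s ∂(bp i + bn i).measure + ∫ s in Ioc r t, v j s ∂(bbar i j).measure := by
    intro i j hij r hr
    have hint : ∀ (μ : Measure ℝ) [IsLocallyFiniteMeasure μ], IntegrableOn (v i) (Ioc r t) μ :=
      fun μ _ => (integrableOn_Ioc_of_nonneg_of_bddAbove (hv_meas i) (hv_nonneg i)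
        (hbdd i)).mono_set (Ioc_subset_Ioc_left hr.1)
    rw [StieltjesFunction.measure_add, Measure.restrict_add, integral_add_measure (hint _) (hint _)]
    exact hineq i j hij r hr
  have hlam_le : ∀ k, lam k ≤ √(lam 0 ^ 2 + lam 1 ^ 2) := fun k =>
    Real.le_sqrt_of_sq_le (by fin_cases k <;> simp [sq_nonneg])
  intro i j hij r hr
  have ht0 : (0 : ℝ) ≤ t := hr.1.trans hr.2
  have h := le_mul_exp_of_coupled_le_add_setIntegral (hlam i) (hlam j) (hv_meas i) (hv_nonneg i)
    (hv_nonneg j) (hbdd i) (hbdd j) (hsys i j hij) (hsys j i hij.symm) r hr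
  simp only [StieltjesFunction.add_apply, hbbar0 i j hij, hbbar0 j i hij.symm, sub_zero] at h
  refine h.trans ((add_mul_mul_exp_le (hlam_le i) (hlam_le j) (Real.sqrt_nonneg _) ?_ ?_).trans_eq
    ?_)
  · linarith [(bp j).mono ht0, (bn j).mono ht0]
  · rw [← hbbar0 i j hij]; exact (bbar i j).mono ht0
  · obtain ⟨rfl, rfl⟩ | ⟨rfl, rfl⟩ : (i = 0 ∧ j = 1) ∨ (i = 1 ∧ j = 0) := by omega
    all_goals ring_nf

/-- a priori bound for positive solutions. Here `b i i = bp i - bn i`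
with `bp i, bn i` Stieltjes functions, so that the total variation function is
`‖b i i‖ = (bp i - bp i 0) + (bn i - bn i 0)`; `bbar i j` (`i ≠ j`) is increasing
right continuous with `bbar i j 0 = 0`; `‖λ‖` is the Euclidean norm of
`λ = (λ₁,λ₂) ∈ ℝ₊²`. If a bounded measurable `v : [0,t] → ℝ₊²` satisfies
`v i r ≤ λ i + ∫_{(r,t]} v i d‖b i i‖ + ∫_{(r,t]} v j dbbar i j`, then
`v i r ≤ ‖λ‖ (1 + bbar i j t) exp( e^{‖b j j‖(t)} bbar 0 1 t · bbar 1 0 t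
  + ‖b 0 0‖(t) + ‖b 1 1‖(t) )` on `[0,t]`. -/
theorem stmt8 (t : ℝ) (ht : 0 < t) (lam : Fin 2 → ℝ) (hlam : ∀ i, 0 ≤ lam i)
    (bbar : Fin 2 → Fin 2 → StieltjesFunction ℝ)
    (hbbar0 : ∀ i j : Fin 2, i ≠ j → bbar i j 0 = 0)
    (bp bn : Fin 2 → StieltjesFunction ℝ)
    (v : Fin 2 → ℝ → ℝ)
    (hv_meas : ∀ i, Measurable (v i))
    (hv_nonneg : ∀ i, ∀ r ∈ Set.Icc (0 : ℝ) t, 0 ≤ v i r)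
    (hv_bdd : ∃ C, ∀ i, ∀ r ∈ Set.Icc (0 : ℝ) t, |v i r| ≤ C)
    (hineq : ∀ i j : Fin 2, i ≠ j → ∀ r ∈ Set.Icc (0 : ℝ) t,
      v i r ≤ lam i +
        ((∫ s in Set.Ioc r t, v i s ∂(bp i).measure) +
          ∫ s in Set.Ioc r t, v i s ∂(bn i).measure) +
        ∫ s in Set.Ioc r t, v j s ∂(bbar i j).measure) :
    ∀ i j : Fin 2, i ≠ j → ∀ r ∈ Set.Icc (0 : ℝ) t,
      v i r ≤
        Real.sqrt (lam 0 ^ 2 + lam 1 ^ 2) * (1 + bbar i j t) *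
          Real.exp
            (Real.exp ((bp j t - bp j 0) + (bn j t - bn j 0)) *
                (bbar 0 1 t * bbar 1 0 t) +
              ((bp 0 t - bp 0 0) + (bn 0 t - bn 0 0)) +
              ((bp 1 t - bp 1 0) + (bn 1 t - bn 1 0))) :=
  stmt8_general t lam hlam bbar hbbar0 bp bn v hv_meas hv_nonneg hv_bdd hineq
end

section
/- Lipschitz estimate for the nonlinear integral term: for λ, μ ∈ [0,M]² and a measure m on ℝ₊²\{0} with ∫ (z₁² 1_{‖z‖≤1} + z₁ 1_{‖z‖>1} + z₂) m(dz) < ∞, one has |∫ K₁(λ,z) m(dz) − ∫ K₁(μ,z) m(dz)| ≤ (2M+1) ( |λ₁−μ₁| ∫ (z₁ 1_{‖z‖>1} + z₁² 1_{‖z‖≤1} + z₂) m(dz) + |λ₂−μ₂| ∫ z₂ m(dz) ), where K₁(λ,z) = e^{-⟨λ,z⟩} − 1 + λ₁ z₁. -/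
open Real MeasureTheory

/-!
Along the segment `t ↦ μ + t (λ - μ)` the derivative of `K₁(·, z)` is
`(λ₁ - μ₁) z₁ (1 - e^{-u}) - (λ₂ - μ₂) z₂ e^{-u}` with `u = ⟨μ + t (λ - μ), z⟩ ∈ [0, M (z₁ + z₂)]`.
Since `z₁ (1 - e^{-u}) ≤ min (z₁, z₁ u)`, and `z₁ u ≤ M (z₁² + z₂)` when `‖z‖ ≤ 1`, the mean value
theorem bounds `|K₁(λ, z) - K₁(μ, z)|` pointwise by `(2M+1)(|λ₁ - μ₁| w(z) + |λ₂ - μ₂| z₂)`, where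
`w = momentWeight` is the integrand of the moment condition. Integrating gives the estimate;
taking `μ = 0`, where `K₁` vanishes, gives integrability.
-/

noncomputable section

def K₁ (a b : ℝ) (z : ℝ × ℝ) : ℝ := exp (-(a * z.1 + b * z.2)) - 1 + a * z.1

def momentWeight (z : ℝ × ℝ) : ℝ :=
  (if 1 < √(z.1 ^ 2 + z.2 ^ 2) then z.1 else 0) + (if √(z.1 ^ 2 + z.2 ^ 2) ≤ 1 then z.1 ^ 2 else 0)
    + z.2

lemma momentWeight_nonneg {z : ℝ × ℝ} (hz₁ : 0 ≤ z.1) (hz₂ : 0 ≤ z.2) : 0 ≤ momentWeight z := by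
  unfold momentWeight
  split_ifs <;> positivity

lemma fst_mul_one_sub_exp_neg_le {M u : ℝ} {z : ℝ × ℝ} (hM : 0 ≤ M) (hz₁ : 0 ≤ z.1)
    (hz₂ : 0 ≤ z.2) (hu : u ≤ M * (z.1 + z.2)) :
    z.1 * (1 - exp (-u)) ≤ (M + 1) * momentWeight z := by
  have h_le_u : 1 - exp (-u) ≤ u := by linarith [add_one_le_exp (-u)]
  have h_le_one : 1 - exp (-u) ≤ 1 := by linarith [exp_pos (-u)]
  unfold momentWeight
  split_ifs with hbig hsmall hsmall
  · exact absurd hsmall (not_le.2 hbig)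
  · nlinarith [mul_le_mul_of_nonneg_left h_le_one hz₁]
  · have hz₁_le : z.1 ≤ 1 :=
      ((le_sqrt hz₁ (by positivity)).2 (by nlinarith)).trans hsmall
    nlinarith [mul_le_mul_of_nonneg_left h_le_u hz₁, mul_le_mul_of_nonneg_left hu hz₁,
      mul_nonneg (mul_nonneg hM hz₂) (sub_nonneg.2 hz₁_le)]
  · exact absurd (not_lt.1 hbig) hsmall

lemma hasDerivAt_K₁_segment (l₁ l₂ m₁ m₂ t : ℝ) (z : ℝ × ℝ) :
    HasDerivAt (fun s => K₁ (m₁ + s * (l₁ - m₁)) (m₂ + s * (l₂ - m₂)) z)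
      ((l₁ - m₁) * z.1 * (1 - exp (-((m₁ + t * (l₁ - m₁)) * z.1 + (m₂ + t * (l₂ - m₂)) * z.2)))
        - (l₂ - m₂) * z.2 * exp (-((m₁ + t * (l₁ - m₁)) * z.1 + (m₂ + t * (l₂ - m₂)) * z.2)))
      t := by
  have hcoord (c d w : ℝ) : HasDerivAt (fun s => (c + s * (d - c)) * w) ((d - c) * w) t :=
    ((((hasDerivAt_id t).mul_const (d - c)).const_add c).mul_const w).congr_deriv (by ring)
  set u := fun s => (m₁ + s * (l₁ - m₁)) * z.1 + (m₂ + s * (l₂ - m₂)) * z.2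
  have hu : HasDerivAt u ((l₁ - m₁) * z.1 + (l₂ - m₂) * z.2) t :=
    (hcoord m₁ l₁ z.1).add (hcoord m₂ l₂ z.2)
  have hexp : HasDerivAt (fun s => exp (-u s)) (exp (-u t) * -((l₁ - m₁) * z.1 + (l₂ - m₂) * z.2))
      t := hu.neg.exp
  exact ((hexp.sub_const 1).add (hcoord m₁ l₁ z.1)).congr_deriv (by ring)

lemma abs_deriv_K₁_segment_le {M a₁ a₂ d₁ d₂ : ℝ} {z : ℝ × ℝ} (hz₁ : 0 ≤ z.1) (hz₂ : 0 ≤ z.2)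
    (ha₁ : a₁ ∈ Set.Icc 0 M) (ha₂ : a₂ ∈ Set.Icc 0 M) :
    |d₁ * z.1 * (1 - exp (-(a₁ * z.1 + a₂ * z.2))) - d₂ * z.2 * exp (-(a₁ * z.1 + a₂ * z.2))| ≤
      (2 * M + 1) * (|d₁| * momentWeight z + |d₂| * z.2) := by
  set u := a₁ * z.1 + a₂ * z.2
  have hM : 0 ≤ M := ha₁.1.trans ha₁.2
  have hu₀ : 0 ≤ u := add_nonneg (mul_nonneg ha₁.1 hz₁) (mul_nonneg ha₂.1 hz₂)
  have huM : u ≤ M * (z.1 + z.2) := by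
    nlinarith [mul_le_mul_of_nonneg_right ha₁.2 hz₁, mul_le_mul_of_nonneg_right ha₂.2 hz₂]
  have hE₀ := exp_pos (-u)
  have hE₁ : exp (-u) ≤ 1 := exp_le_one_iff.2 (by linarith)
  have hw := momentWeight_nonneg hz₁ hz₂
  calc |d₁ * z.1 * (1 - exp (-u)) - d₂ * z.2 * exp (-u)|
      ≤ |d₁| * (z.1 * (1 - exp (-u))) + |d₂| * (z.2 * exp (-u)) := by
        refine (abs_sub _ _).trans (le_of_eq ?_)
        rw [mul_assoc, mul_assoc, abs_mul, abs_mul d₂,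
          abs_of_nonneg (mul_nonneg hz₁ (sub_nonneg.2 hE₁)), abs_of_nonneg (mul_nonneg hz₂ hE₀.le)]
    _ ≤ |d₁| * ((M + 1) * momentWeight z) + |d₂| * z.2 := by
        gcongr ?_ * ?_ + ?_ * ?_
        · exact fst_mul_one_sub_exp_neg_le hM hz₁ hz₂ huM
        · exact mul_le_of_le_one_right hz₂ hE₁
    _ ≤ (2 * M + 1) * (|d₁| * momentWeight z + |d₂| * z.2) := by
        nlinarith [mul_nonneg (abs_nonneg d₁) hw, mul_nonneg (abs_nonneg d₂) hz₂]

lemma abs_K₁_sub_K₁_le {M l₁ l₂ m₁ m₂ : ℝ} {z : ℝ × ℝ} (hz₁ : 0 ≤ z.1) (hz₂ : 0 ≤ z.2)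
    (hl₁ : l₁ ∈ Set.Icc 0 M) (hl₂ : l₂ ∈ Set.Icc 0 M)
    (hm₁ : m₁ ∈ Set.Icc 0 M) (hm₂ : m₂ ∈ Set.Icc 0 M) :
    |K₁ l₁ l₂ z - K₁ m₁ m₂ z| ≤
      (2 * M + 1) * (|l₁ - m₁| * momentWeight z + |l₂ - m₂| * z.2) := by
  have hsegment {l m : ℝ} (hl : l ∈ Set.Icc 0 M) (hm : m ∈ Set.Icc 0 M) {t : ℝ}
      (ht : t ∈ Set.Ico (0 : ℝ) 1) : m + t * (l - m) ∈ Set.Icc 0 M := by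
    obtain ⟨ht₀, ht₁⟩ := ht
    constructor <;> nlinarith [hl.1, hl.2, hm.1, hm.2]
  have hmvt := norm_image_sub_le_of_norm_deriv_le_segment_01'
    (fun t _ => (hasDerivAt_K₁_segment l₁ l₂ m₁ m₂ t z).hasDerivWithinAt)
    (fun t ht => (Real.norm_eq_abs _).trans_le <|
      abs_deriv_K₁_segment_le hz₁ hz₂ (hsegment hl₁ hm₁ ht) (hsegment hl₂ hm₂ ht))
  simpa [K₁] using hmvt

section Integral

variable {M l₁ l₂ : ℝ} {ν : Measure (ℝ × ℝ)}

lemma integrable_K₁ (hquad : ∀ᵐ z ∂ν, 0 ≤ z.1 ∧ 0 ≤ z.2) (hw : Integrable momentWeight ν)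
    (hz₂ : Integrable (fun z : ℝ × ℝ => z.2) ν) (hl₁ : l₁ ∈ Set.Icc 0 M) (hl₂ : l₂ ∈ Set.Icc 0 M) :
    Integrable (K₁ l₁ l₂) ν := by
  have h0 : (0 : ℝ) ∈ Set.Icc 0 M := ⟨le_rfl, hl₁.1.trans hl₁.2⟩
  have hcont : Continuous (K₁ l₁ l₂) := by unfold K₁; fun_prop
  refine (((hw.const_mul |l₁ - 0|).add (hz₂.const_mul |l₂ - 0|)).const_mul (2 * M + 1)).mono'
    hcont.aestronglyMeasurable ?_
  filter_upwards [hquad] with z ⟨hz₁, hz₂⟩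
  simpa [K₁] using abs_K₁_sub_K₁_le hz₁ hz₂ hl₁ hl₂ h0 h0

lemma abs_integral_K₁_sub_le {m₁ m₂ : ℝ} (hquad : ∀ᵐ z ∂ν, 0 ≤ z.1 ∧ 0 ≤ z.2)
    (hw : Integrable momentWeight ν) (hz₂ : Integrable (fun z : ℝ × ℝ => z.2) ν)
    (hl₁ : l₁ ∈ Set.Icc 0 M) (hl₂ : l₂ ∈ Set.Icc 0 M)
    (hm₁ : m₁ ∈ Set.Icc 0 M) (hm₂ : m₂ ∈ Set.Icc 0 M) :
    |∫ z, K₁ l₁ l₂ z ∂ν - ∫ z, K₁ m₁ m₂ z ∂ν| ≤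
      (2 * M + 1) * (|l₁ - m₁| * ∫ z, momentWeight z ∂ν + |l₂ - m₂| * ∫ z, z.2 ∂ν) := by
  have hbound := ((hw.const_mul |l₁ - m₁|).add (hz₂.const_mul |l₂ - m₂|)).const_mul (2 * M + 1)
  calc |∫ z, K₁ l₁ l₂ z ∂ν - ∫ z, K₁ m₁ m₂ z ∂ν|
      = |∫ z, (K₁ l₁ l₂ z - K₁ m₁ m₂ z) ∂ν| := by
        rw [integral_sub (integrable_K₁ hquad hw hz₂ hl₁ hl₂) (integrable_K₁ hquad hw hz₂ hm₁ hm₂)]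
    _ ≤ ∫ z, |K₁ l₁ l₂ z - K₁ m₁ m₂ z| ∂ν := abs_integral_le_integral_abs
    _ ≤ ∫ z, (2 * M + 1) * (|l₁ - m₁| * momentWeight z + |l₂ - m₂| * z.2) ∂ν := by
        refine integral_mono_of_nonneg (ae_of_all _ fun z => abs_nonneg _) hbound ?_
        filter_upwards [hquad] with z ⟨hz₁, hz₂⟩
        exact abs_K₁_sub_K₁_le hz₁ hz₂ hl₁ hl₂ hm₁ hm₂
    _ = (2 * M + 1) * (|l₁ - m₁| * ∫ z, momentWeight z ∂ν + |l₂ - m₂| * ∫ z, z.2 ∂ν) := by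
        rw [integral_const_mul, integral_add (hw.const_mul _) (hz₂.const_mul _),
          integral_const_mul, integral_const_mul]

end Integral

end

theorem stmt11_general (M : ℝ) (m : Measure (ℝ × ℝ))
    (hsupp : ∀ᵐ z ∂m, 0 ≤ z.1 ∧ 0 ≤ z.2 ∧ z ≠ (0, 0))
    (hmom : Integrable (fun z : ℝ × ℝ =>
      (if Real.sqrt (z.1 ^ 2 + z.2 ^ 2) ≤ 1 then z.1 ^ 2 else 0) +
      (if 1 < Real.sqrt (z.1 ^ 2 + z.2 ^ 2) then z.1 else 0) + z.2) m)
    (l1 l2 m1 m2 : ℝ)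
    (hl : l1 ∈ Set.Icc 0 M ∧ l2 ∈ Set.Icc 0 M)
    (hm : m1 ∈ Set.Icc 0 M ∧ m2 ∈ Set.Icc 0 M) :
    Integrable (fun z : ℝ × ℝ => Real.exp (-(l1 * z.1 + l2 * z.2)) - 1 + l1 * z.1) m ∧
    Integrable (fun z : ℝ × ℝ => Real.exp (-(m1 * z.1 + m2 * z.2)) - 1 + m1 * z.1) m ∧
    |(∫ z, (Real.exp (-(l1 * z.1 + l2 * z.2)) - 1 + l1 * z.1) ∂m) -
        ∫ z, (Real.exp (-(m1 * z.1 + m2 * z.2)) - 1 + m1 * z.1) ∂m| ≤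
      (2 * M + 1) *
        (|l1 - m1| * ∫ z, ((if 1 < Real.sqrt (z.1 ^ 2 + z.2 ^ 2) then z.1 else 0) +
            (if Real.sqrt (z.1 ^ 2 + z.2 ^ 2) ≤ 1 then z.1 ^ 2 else 0) + z.2) ∂m +
         |l2 - m2| * ∫ z, z.2 ∂m) := by
  have hquad : ∀ᵐ z ∂m, 0 ≤ z.1 ∧ 0 ≤ z.2 := hsupp.mono fun _ hz => ⟨hz.1, hz.2.1⟩
  have hw : Integrable momentWeight m := hmom.congr (ae_of_all _ fun z => by
    simp only [momentWeight]; ring)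
  have hz₂ : Integrable (fun z : ℝ × ℝ => z.2) m := by
    refine hw.mono' continuous_snd.aestronglyMeasurable ?_
    filter_upwards [hquad] with z ⟨hz₁, hz₂⟩
    rw [norm_of_nonneg hz₂, momentWeight]
    split_ifs <;> nlinarith
  exact ⟨integrable_K₁ hquad hw hz₂ hl.1 hl.2, integrable_K₁ hquad hw hz₂ hm.1 hm.2,
    abs_integral_K₁_sub_le hquad hw hz₂ hl.1 hl.2 hm.1 hm.2⟩

/-- Lipschitz estimate for the nonlinear integral term. For
`λ, μ ∈ [0,M]²` and a measure `m` on `ℝ₊²\{0}` with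
`∫ (z₁² 1_{‖z‖≤1} + z₁ 1_{‖z‖>1} + z₂) m(dz) < ∞`,
`|∫ K₁(λ,z) m(dz) − ∫ K₁(μ,z) m(dz)| ≤
  (2M+1)( |λ₁−μ₁| ∫ (z₁ 1_{‖z‖>1} + z₁² 1_{‖z‖≤1} + z₂) m(dz) + |λ₂−μ₂| ∫ z₂ m(dz) )`,
where `K₁(λ,z) = e^{-⟨λ,z⟩} − 1 + λ₁z₁` and `‖z‖` is the Euclidean norm. -/
theorem stmt11 (M : ℝ) (hM : 0 < M) (m : Measure (ℝ × ℝ))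
    (hsupp : ∀ᵐ z ∂m, 0 ≤ z.1 ∧ 0 ≤ z.2 ∧ z ≠ (0, 0))
    (hmom : Integrable (fun z : ℝ × ℝ =>
      (if Real.sqrt (z.1 ^ 2 + z.2 ^ 2) ≤ 1 then z.1 ^ 2 else 0) +
      (if 1 < Real.sqrt (z.1 ^ 2 + z.2 ^ 2) then z.1 else 0) + z.2) m)
    (l1 l2 m1 m2 : ℝ)
    (hl : l1 ∈ Set.Icc 0 M ∧ l2 ∈ Set.Icc 0 M)
    (hm : m1 ∈ Set.Icc 0 M ∧ m2 ∈ Set.Icc 0 M) :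
    Integrable (fun z : ℝ × ℝ => Real.exp (-(l1 * z.1 + l2 * z.2)) - 1 + l1 * z.1) m ∧
    Integrable (fun z : ℝ × ℝ => Real.exp (-(m1 * z.1 + m2 * z.2)) - 1 + m1 * z.1) m ∧
    |(∫ z, (Real.exp (-(l1 * z.1 + l2 * z.2)) - 1 + l1 * z.1) ∂m) -
        ∫ z, (Real.exp (-(m1 * z.1 + m2 * z.2)) - 1 + m1 * z.1) ∂m| ≤
      (2 * M + 1) *
        (|l1 - m1| * ∫ z, ((if 1 < Real.sqrt (z.1 ^ 2 + z.2 ^ 2) then z.1 else 0) +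
            (if Real.sqrt (z.1 ^ 2 + z.2 ^ 2) ≤ 1 then z.1 ^ 2 else 0) + z.2) ∂m +
         |l2 - m2| * ∫ z, z.2 ∂m) :=
  stmt11_general M m hsupp hmom l1 l2 m1 m2 hl hm
end

section
/- Uniqueness of positive bounded solutions to the special (affine-in-jump) backward system: for fixed t and λ ∈ ℝ₊², any two bounded positive solutions r ↦ u(r) of u_i(r) = λ_i + ∫_{(r,t]} u_i(s) γ_ii(ds) + ∫_{(r,t]} u_j(s) γ_ij(ds) + ∫_{(r,t]} ∫ (1 − e^{-⟨u(s),z⟩}) μ_i(ds,dz) (i=1,2, j≠i) coincide on [0,t]. -/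
/-!
Put `D = |u₀ - w₀| + |u₁ - w₁|`. Since `x ↦ e^{-x}` is `1`-Lipschitz on `ℝ₊`, subtracting the two
equations gives `D r ≤ ∫_{(r,t]} D dν` for the measure
`ν = ∑ᵢ (γ⁺ᵢᵢ + γ⁻ᵢᵢ + γᵢⱼ + κᵢ)`, `κᵢ(ds) = ∫ (z₁ + z₂) μᵢ(ds, dz)`, which is finite on `(0, t]`.
A backward Gronwall argument forces `D = 0`: if `D` vanishes on `[a, t]` with `a > 0`, choose
`b < a` with `ν (b, a) < 1`; the supremum `m` of `D` on `(b, a)` then satisfies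
`m ≤ m · ν (b, a)`, so `m = 0`, contradicting the minimality of `a`.
-/

open Real MeasureTheory
open scoped ENNReal

section

open Set

lemma abs_exp_neg_sub_exp_neg_le {x y : ℝ} (hx : 0 ≤ x) (hy : 0 ≤ y) :
    |exp (-x) - exp (-y)| ≤ |x - y| := by
  wlog hxy : x ≤ y generalizing x y
  · rw [abs_sub_comm, abs_sub_comm x]
    exact this hy hx (le_of_not_ge hxy)
  have hsplit : exp (-x) - exp (-y) = exp (-x) * (1 - exp (-(y - x))) := by
    rw [mul_sub, ← exp_add]; ring_nf
  have h1 : exp (-x) ≤ 1 := exp_le_one_iff.2 (by linarith)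
  have h2 : 0 ≤ 1 - exp (-(y - x)) := sub_nonneg.2 (exp_le_one_iff.2 (by linarith))
  have h3 : 1 - exp (-(y - x)) ≤ y - x := by linarith [one_sub_le_exp_neg (y - x)]
  rw [hsplit, abs_of_nonneg (mul_nonneg (exp_pos _).le h2), abs_of_nonpos (by linarith)]
  nlinarith [exp_pos (-x)]

lemma integrableOn_of_mem_Icc {α : Type*} [MeasurableSpace α] {ρ : Measure α} {s : Set α}
    {f : α → ℝ} {a b : ℝ} (hs : MeasurableSet s) (hρ : ρ s ≠ ∞) (hf : Measurable f)
    (h : ∀ x ∈ s, f x ∈ Icc a b) : IntegrableOn f s ρ :=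
  Measure.integrableOn_of_bounded hρ hf.aestronglyMeasurable (M := max |a| |b|)
    (ae_restrict_of_forall_mem hs fun x hx => abs_le_max_abs_abs (h x hx).1 (h x hx).2)

lemma abs_setIntegral_sub_setIntegral_le {α : Type*} [MeasurableSpace α] {ρ : Measure α}
    {s : Set α} {f g D : α → ℝ} (hf : IntegrableOn f s ρ) (hg : IntegrableOn g s ρ)
    (hD : IntegrableOn D s ρ) (hfg : ∀ᵐ x ∂ρ.restrict s, |f x - g x| ≤ D x) :
    |∫ x in s, f x ∂ρ - ∫ x in s, g x ∂ρ| ≤ ∫ x in s, D x ∂ρ := by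
  rw [← integral_sub hf hg]
  exact abs_integral_le_integral_abs.trans (integral_mono_ae (hf.sub hg).abs hD hfg)

lemma exists_measure_Ioo_lt {ν : Measure ℝ} {c a : ℝ} (hca : c < a) (hfin : ν (Ioo c a) ≠ ∞)
    {ε : ℝ≥0∞} (hε : 0 < ε) : ∃ b ∈ Ico c a, ν (Ioo b a) < ε := by
  have hlim := tendsto_measure_biInter_gt (μ := ν) (s := fun δ : ℝ => Ioo (a - δ) a) (a := 0)
    (fun _ _ => measurableSet_Ioo.nullMeasurableSet)
    (fun _ _ _ hδ => Ioo_subset_Ioo_left (by linarith)) ⟨a - c, sub_pos.2 hca, by simpa using hfin⟩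
  have hempty : ⋂ δ > (0 : ℝ), Ioo (a - δ) a = ∅ :=
    eq_empty_of_forall_notMem fun x hx => by
      have := (mem_iInter₂.1 hx (a - x) (sub_pos.2 (mem_iInter₂.1 hx 1 one_pos).2)).1
      linarith
  rw [hempty, measure_empty] at hlim
  obtain ⟨δ, hδε, hδ⟩ :=
    ((hlim.eventually (gt_mem_nhds hε)).and (Ioo_mem_nhdsGT (sub_pos.2 hca))).exists
  exact ⟨a - δ, ⟨by linarith [hδ.2], by linarith [hδ.1]⟩, hδε⟩

section Gronwall

variable {ν : Measure ℝ} {t M : ℝ} {D : ℝ → ℝ}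

lemma exists_lt_eqOn_zero_of_le_setIntegral_Ioc (hν : ν (Ioc 0 t) ≠ ∞)
    (hD : IntegrableOn D (Ioc 0 t) ν) (hD0 : ∀ r ∈ Icc 0 t, 0 ≤ D r)
    (hDM : ∀ r ∈ Icc 0 t, D r ≤ M) (hle : ∀ r ∈ Icc 0 t, D r ≤ ∫ s in Ioc r t, D s ∂ν)
    {a : ℝ} (ha : a ∈ Ioc 0 t) (hzero : ∀ s ∈ Icc a t, D s = 0) :
    ∃ b ∈ Ico 0 a, ∀ s ∈ Ioo b a, D s = 0 := by
  have hsub : Ioo 0 a ⊆ Ioc 0 t := fun s hs => ⟨hs.1, hs.2.le.trans ha.2⟩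
  obtain ⟨b, hb, hνb⟩ :=
    exists_measure_Ioo_lt ha.1 (ne_top_of_le_ne_top hν (measure_mono hsub)) one_pos
  have hIcc : ∀ s ∈ Ioo b a, s ∈ Icc 0 t := fun s hs => ⟨hb.1.trans hs.1.le, hs.2.le.trans ha.2⟩
  set m := sSup (D '' Ioo b a)
  have hne : (D '' Ioo b a).Nonempty := (nonempty_Ioo.2 hb.2).image D
  have hbdd : BddAbove (D '' Ioo b a) := ⟨M, forall_mem_image.2 fun s hs => hDM s (hIcc s hs)⟩
  have hDm : ∀ s ∈ Ioo b a, D s ≤ m := fun s hs => le_csSup hbdd (mem_image_of_mem D hs)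
  have hm0 : 0 ≤ m := let ⟨s, hs⟩ := nonempty_Ioo.2 hb.2; (hD0 s (hIcc s hs)).trans (hDm s hs)
  set c := ν.real (Ioo b a)
  have hc : c < 1 := ENNReal.toReal_lt_of_lt_ofReal (by simpa using hνb)
  have hstep : ∀ r ∈ Ioo b a, D r ≤ m * c := by
    intro r hr
    have hfin : ν (Ioo b a) ≠ ∞ := hνb.ne_top
    calc D r ≤ ∫ s in Ioc r t, D s ∂ν := hle r (hIcc r hr)
      _ ≤ ∫ s in Ioc r t, (Ioo b a).indicator (fun _ => m) s ∂ν := by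
          refine setIntegral_mono_on (hD.mono_set (Ioc_subset_Ioc_left (hIcc r hr).1)) ?_
            measurableSet_Ioc fun s hs => ?_
          · exact ((integrable_indicator_iff measurableSet_Ioo).2
              (integrableOn_const (C := m) hfin)).integrableOn
          · rcases lt_or_ge s a with hsa | hsa
            · have hs' : s ∈ Ioo b a := ⟨hr.1.trans hs.1, hsa⟩
              rw [indicator_of_mem hs']
              exact hDm s hs'
            · rw [hzero s ⟨hsa, hs.2⟩]
              exact indicator_nonneg (fun _ _ => hm0) s
      _ ≤ m * c := by
          rw [integral_indicator_const _ measurableSet_Ioo, smul_eq_mul, mul_comm,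
            measureReal_restrict_apply measurableSet_Ioo]
          exact mul_le_mul_of_nonneg_left (measureReal_mono inter_subset_left hfin) hm0
  have hm : m ≤ 0 := by
    have : m ≤ m * c := csSup_le hne (forall_mem_image.2 hstep)
    nlinarith
  exact ⟨b, hb, fun s hs => le_antisymm ((hDm s hs).trans hm) (hD0 s (hIcc s hs))⟩

theorem eq_zero_of_le_setIntegral_Ioc (hν : ν (Ioc 0 t) ≠ ∞)
    (hD : IntegrableOn D (Ioc 0 t) ν) (hD0 : ∀ r ∈ Icc 0 t, 0 ≤ D r)
    (hDM : ∀ r ∈ Icc 0 t, D r ≤ M) (hle : ∀ r ∈ Icc 0 t, D r ≤ ∫ s in Ioc r t, D s ∂ν) :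
    ∀ r ∈ Icc 0 t, D r = 0 := by
  intro r hr
  set S := {a ∈ Icc 0 t | ∀ s ∈ Ioc a t, D s = 0}
  have htS : t ∈ S := ⟨⟨hr.1.trans hr.2, le_rfl⟩, by simp⟩
  have hS : BddBelow S := ⟨0, fun a ha => ha.1.1⟩
  set a := sInf S
  have haS : a ∈ S := by
    refine ⟨⟨le_csInf ⟨t, htS⟩ fun b hb => hb.1.1, csInf_le hS htS⟩, fun s hs => ?_⟩
    obtain ⟨b, hbS, hbs⟩ := exists_lt_of_csInf_lt ⟨t, htS⟩ hs.1
    exact hbS.2 s ⟨hbs, hs.2⟩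
  have hDa : D a = 0 :=
    le_antisymm ((hle a haS.1).trans_eq (setIntegral_eq_zero_of_forall_eq_zero haS.2))
      (hD0 a haS.1)
  have hzero : ∀ s ∈ Icc a t, D s = 0 := fun s hs =>
    hs.1.eq_or_lt.elim (fun h => h ▸ hDa) fun h => haS.2 s ⟨h, hs.2⟩
  have ha : a = 0 := by
    by_contra hne
    obtain ⟨b, hb, hbD⟩ := exists_lt_eqOn_zero_of_le_setIntegral_Ioc hν hD hD0 hDM hle
      ⟨haS.1.1.lt_of_ne' hne, haS.1.2⟩ hzero
    have hbS : b ∈ S := by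
      refine ⟨⟨hb.1, hb.2.le.trans haS.1.2⟩, fun s hs => ?_⟩
      rcases lt_or_ge s a with hsa | hsa
      · exact hbD s ⟨hs.1, hsa⟩
      · exact hzero s ⟨hsa, hs.2⟩
    exact (csInf_le hS hbS).not_gt hb.2
  exact hzero r (ha ▸ hr)

end Gronwall

/-- The integrand `1 - e^{-⟨u(s), z⟩}` of the jump term, at `p = (s, z)`. -/
noncomputable def jumpIntegrand (u : Fin 2 → ℝ → ℝ) (p : ℝ × (ℝ × ℝ)) : ℝ :=
  1 - exp (-(u 0 p.1 * p.2.1 + u 1 p.1 * p.2.2))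

noncomputable def l1Dist (u w : Fin 2 → ℝ → ℝ) (s : ℝ) : ℝ := ∑ k, |u k s - w k s|

section l1Dist

variable {u w : Fin 2 → ℝ → ℝ}

lemma l1Dist_nonneg (s : ℝ) : 0 ≤ l1Dist u w s :=
  Finset.sum_nonneg fun _ _ => abs_nonneg _

lemma abs_sub_le_l1Dist (k : Fin 2) (s : ℝ) : |u k s - w k s| ≤ l1Dist u w s :=
  Finset.single_le_sum (f := fun k => |u k s - w k s|) (fun _ _ => abs_nonneg _)
    (Finset.mem_univ k)

lemma l1Dist_le {C s : ℝ} (hu : ∀ k, u k s ∈ Icc 0 C) (hw : ∀ k, w k s ∈ Icc 0 C) :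
    l1Dist u w s ≤ 2 * C := by
  have h : ∀ k, |u k s - w k s| ≤ C := fun k => by
    simpa using abs_sub_le_of_le_of_le (hu k).1 (hu k).2 (hw k).1 (hw k).2
  simpa [l1Dist, Fin.sum_univ_two, two_mul] using add_le_add (h 0) (h 1)

lemma eq_of_l1Dist_eq_zero {s : ℝ} (h : l1Dist u w s = 0) (k : Fin 2) : u k s = w k s :=
  sub_eq_zero.1 (abs_nonpos_iff.1 ((abs_sub_le_l1Dist k s).trans h.le))

lemma measurable_l1Dist (hu : ∀ k, Measurable (u k)) (hw : ∀ k, Measurable (w k)) :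
    Measurable (l1Dist u w) :=
  Finset.measurable_sum _ fun k _ => ((hu k).sub (hw k)).abs

lemma abs_jumpIntegrand_sub_le {p : ℝ × (ℝ × ℝ)} (hz₁ : 0 ≤ p.2.1) (hz₂ : 0 ≤ p.2.2)
    (hu : ∀ k, 0 ≤ u k p.1) (hw : ∀ k, 0 ≤ w k p.1) :
    |jumpIntegrand u p - jumpIntegrand w p| ≤ (p.2.1 + p.2.2) * l1Dist u w p.1 := by
  set U := u 0 p.1 * p.2.1 + u 1 p.1 * p.2.2
  set W := w 0 p.1 * p.2.1 + w 1 p.1 * p.2.2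
  have hU : 0 ≤ U := add_nonneg (mul_nonneg (hu 0) hz₁) (mul_nonneg (hu 1) hz₂)
  have hW : 0 ≤ W := add_nonneg (mul_nonneg (hw 0) hz₁) (mul_nonneg (hw 1) hz₂)
  have h0 := abs_sub_le_l1Dist (u := u) (w := w) 0 p.1
  have h1 := abs_sub_le_l1Dist (u := u) (w := w) 1 p.1
  calc |jumpIntegrand u p - jumpIntegrand w p| = |exp (-U) - exp (-W)| := by
        rw [abs_sub_comm]; congr 1; simp only [jumpIntegrand, U, W]; ring
    _ ≤ |U - W| := abs_exp_neg_sub_exp_neg_le hU hW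
    _ = |(u 0 p.1 - w 0 p.1) * p.2.1 + (u 1 p.1 - w 1 p.1) * p.2.2| := by
        simp only [U, W]; ring_nf
    _ ≤ |u 0 p.1 - w 0 p.1| * p.2.1 + |u 1 p.1 - w 1 p.1| * p.2.2 := by
        refine (abs_add_le _ _).trans_eq ?_
        rw [abs_mul, abs_mul, abs_of_nonneg hz₁, abs_of_nonneg hz₂]
    _ ≤ (p.2.1 + p.2.2) * l1Dist u w p.1 := by nlinarith

lemma l1Dist_le_setIntegral_add_measure {ν₀ ν₁ : Measure ℝ} {s : Set ℝ} {r : ℝ}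
    (hint : IntegrableOn (l1Dist u w) s (ν₀ + ν₁))
    (h₀ : |u 0 r - w 0 r| ≤ ∫ x in s, l1Dist u w x ∂ν₀)
    (h₁ : |u 1 r - w 1 r| ≤ ∫ x in s, l1Dist u w x ∂ν₁) :
    l1Dist u w r ≤ ∫ x in s, l1Dist u w x ∂(ν₀ + ν₁) := by
  obtain ⟨hint₀, hint₁⟩ := integrableOn_add_measure.1 hint
  rw [Measure.restrict_add, integral_add_measure hint₀ hint₁]
  simpa [l1Dist, Fin.sum_univ_two] using add_le_add h₀ h₁

end l1Dist

noncomputable def firstMomentMeasure (μ : Measure (ℝ × (ℝ × ℝ))) : Measure ℝ :=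
  (μ.withDensity fun p => ENNReal.ofReal (p.2.1 + p.2.2)).map Prod.fst

section firstMomentMeasure

variable {μ : Measure (ℝ × (ℝ × ℝ))} {s : Set ℝ}

lemma measurable_firstMomentDensity :
    Measurable fun p : ℝ × (ℝ × ℝ) => ENNReal.ofReal (p.2.1 + p.2.2) :=
  (measurable_snd.fst.add measurable_snd.snd).ennreal_ofReal

lemma firstMomentMeasure_apply (hs : MeasurableSet s) :
    firstMomentMeasure μ s = ∫⁻ p in s ×ˢ univ, ENNReal.ofReal (p.2.1 + p.2.2) ∂μ := by
  rw [firstMomentMeasure, Measure.map_apply measurable_fst hs, ← prod_univ,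
    withDensity_apply _ (hs.prod MeasurableSet.univ)]

lemma firstMomentMeasure_ne_top (hs : MeasurableSet s)
    (hmom : IntegrableOn (fun p : ℝ × (ℝ × ℝ) => p.2.1 + p.2.2) (s ×ˢ univ) μ) :
    firstMomentMeasure μ s ≠ ∞ := by
  rw [firstMomentMeasure_apply hs]
  exact hmom.lintegral_lt_top.ne

lemma setIntegral_firstMomentMeasure (hμ : ∀ᵐ p ∂μ, 0 ≤ p.2.1 ∧ 0 ≤ p.2.2)
    (hs : MeasurableSet s) {f : ℝ → ℝ} (hf : Measurable f) :
    ∫ x in s, f x ∂firstMomentMeasure μ = ∫ p in s ×ˢ univ, (p.2.1 + p.2.2) * f p.1 ∂μ := by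
  rw [firstMomentMeasure, Measure.restrict_map measurable_fst hs,
    integral_map measurable_fst.aemeasurable hf.aestronglyMeasurable, ← prod_univ,
    restrict_withDensity (hs.prod MeasurableSet.univ),
    integral_withDensity_eq_integral_toReal_smul measurable_firstMomentDensity
      (ae_of_all _ fun _ => ENNReal.ofReal_lt_top)]
  refine integral_congr_ae ((ae_restrict_of_ae hμ).mono fun p hp => ?_)
  simp [ENNReal.toReal_ofReal (add_nonneg hp.1 hp.2)]

end firstMomentMeasure

section Estimates

variable {u w : Fin 2 → ℝ → ℝ} {C : ℝ}

lemma integrableOn_l1Dist {ρ : Measure ℝ} {s : Set ℝ} (hs : MeasurableSet s) (hρ : ρ s ≠ ∞)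
    (hu_meas : ∀ k, Measurable (u k)) (hw_meas : ∀ k, Measurable (w k))
    (hu : ∀ k, ∀ x ∈ s, u k x ∈ Icc 0 C) (hw : ∀ k, ∀ x ∈ s, w k x ∈ Icc 0 C) :
    IntegrableOn (l1Dist u w) s ρ :=
  integrableOn_of_mem_Icc hs hρ (measurable_l1Dist hu_meas hw_meas) fun x hx =>
    ⟨l1Dist_nonneg x, l1Dist_le (fun k => hu k x hx) fun k => hw k x hx⟩

variable {r t : ℝ}

lemma abs_setIntegral_sub_le_setIntegral_l1Dist {ρ : Measure ℝ} [IsLocallyFiniteMeasure ρ]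
    (hu_meas : ∀ k, Measurable (u k)) (hw_meas : ∀ k, Measurable (w k))
    (hu : ∀ k, ∀ s ∈ Ioc r t, u k s ∈ Icc 0 C) (hw : ∀ k, ∀ s ∈ Ioc r t, w k s ∈ Icc 0 C)
    (k : Fin 2) :
    |∫ s in Ioc r t, u k s ∂ρ - ∫ s in Ioc r t, w k s ∂ρ| ≤ ∫ s in Ioc r t, l1Dist u w s ∂ρ := by
  exact abs_setIntegral_sub_setIntegral_le
    (integrableOn_of_mem_Icc measurableSet_Ioc measure_Ioc_lt_top.ne (hu_meas k) (hu k))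
    (integrableOn_of_mem_Icc measurableSet_Ioc measure_Ioc_lt_top.ne (hw_meas k) (hw k))
    (integrableOn_l1Dist measurableSet_Ioc measure_Ioc_lt_top.ne hu_meas hw_meas hu hw)
    (ae_of_all _ fun s => abs_sub_le_l1Dist k s)

variable {μ : Measure (ℝ × (ℝ × ℝ))}

lemma measurable_jumpIntegrand (hu_meas : ∀ k, Measurable (u k)) :
    Measurable (jumpIntegrand u) := by
  have := hu_meas 0
  have := hu_meas 1
  unfold jumpIntegrand
  fun_prop

lemma ae_restrict_Ioc_prod (hμ : ∀ᵐ p ∂μ, 0 ≤ p.2.1 ∧ 0 ≤ p.2.2) :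
    ∀ᵐ p ∂μ.restrict (Ioc r t ×ˢ univ), p.1 ∈ Ioc r t ∧ 0 ≤ p.2.1 ∧ 0 ≤ p.2.2 :=
  ((ae_restrict_mem (measurableSet_Ioc.prod .univ)).and (ae_restrict_of_ae hμ)).mono
    fun _ hp => ⟨hp.1.1, hp.2⟩

lemma integrableOn_jumpIntegrand (hμ : ∀ᵐ p ∂μ, 0 ≤ p.2.1 ∧ 0 ≤ p.2.2)
    (hmom : IntegrableOn (fun p : ℝ × (ℝ × ℝ) => p.2.1 + p.2.2) (Ioc r t ×ˢ univ) μ)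
    (hu_meas : ∀ k, Measurable (u k)) (hu : ∀ k, ∀ s ∈ Ioc r t, u k s ∈ Icc 0 C) :
    IntegrableOn (jumpIntegrand u) (Ioc r t ×ˢ univ) μ := by
  refine Integrable.mono' (hmom.mul_const (2 * C))
    (measurable_jumpIntegrand hu_meas).aestronglyMeasurable ?_
  filter_upwards [ae_restrict_Ioc_prod hμ] with p ⟨hs, hz₁, hz₂⟩
  have hu' := fun k => hu k p.1 hs
  have h0 : ∀ k, (0 : ℝ) ∈ Icc 0 C := fun k => ⟨le_rfl, (hu' k).1.trans (hu' k).2⟩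
  have h := abs_jumpIntegrand_sub_le (w := 0) hz₁ hz₂ (fun k => (hu' k).1) fun _ => le_rfl
  have hF0 : jumpIntegrand 0 p = 0 := by simp [jumpIntegrand]
  rw [hF0, sub_zero] at h
  exact h.trans (mul_le_mul_of_nonneg_left (l1Dist_le hu' h0) (add_nonneg hz₁ hz₂))

lemma abs_setIntegral_jumpIntegrand_sub_le (hμ : ∀ᵐ p ∂μ, 0 ≤ p.2.1 ∧ 0 ≤ p.2.2)
    (hmom : IntegrableOn (fun p : ℝ × (ℝ × ℝ) => p.2.1 + p.2.2) (Ioc r t ×ˢ univ) μ)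
    (hu_meas : ∀ k, Measurable (u k)) (hw_meas : ∀ k, Measurable (w k))
    (hu : ∀ k, ∀ s ∈ Ioc r t, u k s ∈ Icc 0 C) (hw : ∀ k, ∀ s ∈ Ioc r t, w k s ∈ Icc 0 C) :
    |∫ p in Ioc r t ×ˢ univ, jumpIntegrand u p ∂μ - ∫ p in Ioc r t ×ˢ univ, jumpIntegrand w p ∂μ|
      ≤ ∫ s in Ioc r t, l1Dist u w s ∂firstMomentMeasure μ := by
  rw [setIntegral_firstMomentMeasure hμ measurableSet_Ioc (measurable_l1Dist hu_meas hw_meas)]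
  refine abs_setIntegral_sub_setIntegral_le (integrableOn_jumpIntegrand hμ hmom hu_meas hu)
    (integrableOn_jumpIntegrand hμ hmom hw_meas hw) ?_ ?_
  · refine Integrable.mono' (hmom.mul_const (2 * C)) (by
      have := measurable_l1Dist hu_meas hw_meas; fun_prop) ?_
    filter_upwards [ae_restrict_Ioc_prod hμ] with p ⟨hs, hz₁, hz₂⟩
    rw [Real.norm_eq_abs, abs_of_nonneg (mul_nonneg (add_nonneg hz₁ hz₂) (l1Dist_nonneg _))]
    exact mul_le_mul_of_nonneg_left (l1Dist_le (fun k => hu k p.1 hs) fun k => hw k p.1 hs)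
      (add_nonneg hz₁ hz₂)
  · filter_upwards [ae_restrict_Ioc_prod hμ] with p ⟨hs, hz₁, hz₂⟩
    exact abs_jumpIntegrand_sub_le hz₁ hz₂ (fun k => (hu k p.1 hs).1) fun k => (hw k p.1 hs).1

theorem abs_sub_le_setIntegral_l1Dist {ρp ρn ρ : Measure ℝ} [IsLocallyFiniteMeasure ρp]
    [IsLocallyFiniteMeasure ρn] [IsLocallyFiniteMeasure ρ] {i j : Fin 2} {c : ℝ}
    (hμ : ∀ᵐ p ∂μ, 0 ≤ p.2.1 ∧ 0 ≤ p.2.2)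
    (hmom : IntegrableOn (fun p : ℝ × (ℝ × ℝ) => p.2.1 + p.2.2) (Ioc r t ×ˢ univ) μ)
    (hu_meas : ∀ k, Measurable (u k)) (hw_meas : ∀ k, Measurable (w k))
    (hu : ∀ k, ∀ s ∈ Ioc r t, u k s ∈ Icc 0 C) (hw : ∀ k, ∀ s ∈ Ioc r t, w k s ∈ Icc 0 C)
    (hu_eq : u i r = c + ((∫ s in Ioc r t, u i s ∂ρp) - ∫ s in Ioc r t, u i s ∂ρn) +
      (∫ s in Ioc r t, u j s ∂ρ) + ∫ p in Ioc r t ×ˢ univ, jumpIntegrand u p ∂μ)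
    (hw_eq : w i r = c + ((∫ s in Ioc r t, w i s ∂ρp) - ∫ s in Ioc r t, w i s ∂ρn) +
      (∫ s in Ioc r t, w j s ∂ρ) + ∫ p in Ioc r t ×ˢ univ, jumpIntegrand w p ∂μ) :
    |u i r - w i r| ≤ ∫ s in Ioc r t, l1Dist u w s ∂(ρp + ρn + ρ + firstMomentMeasure μ) := by
  have hD : ∀ ν : Measure ℝ, ν (Ioc r t) ≠ ∞ → IntegrableOn (l1Dist u w) (Ioc r t) ν :=
    fun ν hν => integrableOn_l1Dist measurableSet_Ioc hν hu_meas hw_meas hu hw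
  have hκ := firstMomentMeasure_ne_top measurableSet_Ioc hmom
  have hp := abs_setIntegral_sub_le_setIntegral_l1Dist (ρ := ρp) hu_meas hw_meas hu hw i
  have hn := abs_setIntegral_sub_le_setIntegral_l1Dist (ρ := ρn) hu_meas hw_meas hu hw i
  have hc := abs_setIntegral_sub_le_setIntegral_l1Dist (ρ := ρ) hu_meas hw_meas hu hw j
  have hj := abs_setIntegral_jumpIntegrand_sub_le hμ hmom hu_meas hw_meas hu hw
  have Ip := hD ρp measure_Ioc_lt_top.ne
  have In := hD ρn measure_Ioc_lt_top.ne
  have Ic := hD ρ measure_Ioc_lt_top.ne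
  have Iκ := hD _ hκ
  simp only [Measure.restrict_add]
  rw [integral_add_measure (Integrable.add_measure (Integrable.add_measure Ip In) Ic) Iκ,
    integral_add_measure (Integrable.add_measure Ip In) Ic, integral_add_measure Ip In,
    hu_eq, hw_eq]
  rw [abs_le] at hp hn hc hj ⊢
  constructor <;> linarith [hp.1, hp.2, hn.1, hn.2, hc.1, hc.2, hj.1, hj.2]

end Estimates

end

theorem stmt13_general (t : ℝ) (lam : Fin 2 → ℝ)
    (gp gn : Fin 2 → StieltjesFunction ℝ)
    (gam : Fin 2 → Fin 2 → StieltjesFunction ℝ)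
    (μ : Fin 2 → Measure (ℝ × (ℝ × ℝ)))
    (hμsupp : ∀ i, ∀ᵐ p ∂(μ i), 0 < p.1 ∧ 0 ≤ p.2.1 ∧ 0 ≤ p.2.2 ∧ p.2 ≠ (0, 0))
    (hμmom : ∀ i, ∀ T : ℝ, IntegrableOn (fun p : ℝ × (ℝ × ℝ) => p.2.1 + p.2.2)
      (Set.Ioc 0 T ×ˢ (Set.univ : Set (ℝ × ℝ))) (μ i))
    (u w : Fin 2 → ℝ → ℝ)
    (hu_meas : ∀ i, Measurable (u i)) (hw_meas : ∀ i, Measurable (w i))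
    (hu_nonneg : ∀ i, ∀ r ∈ Set.Icc (0 : ℝ) t, 0 ≤ u i r)
    (hw_nonneg : ∀ i, ∀ r ∈ Set.Icc (0 : ℝ) t, 0 ≤ w i r)
    (hu_bdd : ∃ C, ∀ i, ∀ r ∈ Set.Icc (0 : ℝ) t, u i r ≤ C)
    (hw_bdd : ∃ C, ∀ i, ∀ r ∈ Set.Icc (0 : ℝ) t, w i r ≤ C)
    (hu : ∀ i j : Fin 2, i ≠ j → ∀ r ∈ Set.Icc (0 : ℝ) t,
      u i r = lam i +
        ((∫ s in Set.Ioc r t, u i s ∂(gp i).measure) -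
          ∫ s in Set.Ioc r t, u i s ∂(gn i).measure) +
        (∫ s in Set.Ioc r t, u j s ∂(gam i j).measure) +
        ∫ p in Set.Ioc r t ×ˢ (Set.univ : Set (ℝ × ℝ)),
          (1 - Real.exp (-(u 0 p.1 * p.2.1 + u 1 p.1 * p.2.2))) ∂(μ i))
    (hw : ∀ i j : Fin 2, i ≠ j → ∀ r ∈ Set.Icc (0 : ℝ) t,
      w i r = lam i +
        ((∫ s in Set.Ioc r t, w i s ∂(gp i).measure) -
          ∫ s in Set.Ioc r t, w i s ∂(gn i).measure) +
        (∫ s in Set.Ioc r t, w j s ∂(gam i j).measure) +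
        ∫ p in Set.Ioc r t ×ˢ (Set.univ : Set (ℝ × ℝ)),
          (1 - Real.exp (-(w 0 p.1 * p.2.1 + w 1 p.1 * p.2.2))) ∂(μ i)) :
    ∀ i, ∀ r ∈ Set.Icc (0 : ℝ) t, u i r = w i r := by
  obtain ⟨Cu, hCu⟩ := hu_bdd
  obtain ⟨Cw, hCw⟩ := hw_bdd
  have huC : ∀ k, ∀ s ∈ Set.Icc 0 t, u k s ∈ Set.Icc 0 (max Cu Cw) := fun k s hs =>
    ⟨hu_nonneg k s hs, (hCu k s hs).trans (le_max_left _ _)⟩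
  have hwC : ∀ k, ∀ s ∈ Set.Icc 0 t, w k s ∈ Set.Icc 0 (max Cu Cw) := fun k s hs =>
    ⟨hw_nonneg k s hs, (hCw k s hs).trans (le_max_right _ _)⟩
  have hz : ∀ i, ∀ᵐ p ∂μ i, 0 ≤ p.2.1 ∧ 0 ≤ p.2.2 := fun i =>
    (hμsupp i).mono fun _ hp => ⟨hp.2.1, hp.2.2.1⟩
  let ν : Fin 2 → Fin 2 → Measure ℝ := fun i j =>
    (gp i).measure + (gn i).measure + (gam i j).measure + firstMomentMeasure (μ i)
  have hν : (ν 0 1 + ν 1 0) (Set.Ioc 0 t) ≠ ∞ := by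
    simp [ν, firstMomentMeasure_ne_top measurableSet_Ioc (hμmom _ t)]
  have hD : IntegrableOn (l1Dist u w) (Set.Ioc 0 t) (ν 0 1 + ν 1 0) :=
    integrableOn_l1Dist measurableSet_Ioc hν hu_meas hw_meas
      (fun k s hs => huC k s (Set.Ioc_subset_Icc_self hs))
      fun k s hs => hwC k s (Set.Ioc_subset_Icc_self hs)
  have key : ∀ r ∈ Set.Icc 0 t,
      l1Dist u w r ≤ ∫ s in Set.Ioc r t, l1Dist u w s ∂(ν 0 1 + ν 1 0) := by
    intro r hr
    have hsub : Set.Ioc r t ⊆ Set.Icc 0 t := fun s hs => ⟨hr.1.trans hs.1.le, hs.2⟩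
    have hcomp : ∀ i j, i ≠ j →
        |u i r - w i r| ≤ ∫ s in Set.Ioc r t, l1Dist u w s ∂ν i j := fun i j hij =>
      abs_sub_le_setIntegral_l1Dist (hz i)
        ((hμmom i t).mono_set (Set.prod_mono_left (Set.Ioc_subset_Ioc_left hr.1)))
        hu_meas hw_meas (fun k s hs => huC k s (hsub hs)) (fun k s hs => hwC k s (hsub hs))
        (hu i j hij r hr) (hw i j hij r hr)
    exact l1Dist_le_setIntegral_add_measure (hD.mono_set (Set.Ioc_subset_Ioc_left hr.1))
      (hcomp 0 1 (by decide)) (hcomp 1 0 (by decide))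
  intro i r hr
  exact eq_of_l1Dist_eq_zero (eq_zero_of_le_setIntegral_Ioc hν hD (fun s _ => l1Dist_nonneg s)
    (fun s hs => l1Dist_le (huC · s hs) (hwC · s hs)) key r hr) i

/-- uniqueness of positive bounded solutions to the special
(affine-in-jump) backward system. `γ i i = gp i - gn i` with `gp i, gn i` Stieltjes
functions and jumps `Δγ i i > −1`; `gam i j` (`i ≠ j`) increasing right continuous;
`μ i` measures on `(0,∞) × (ℝ₊²\{0})` with finite first moments on bounded time sets.
Any two bounded nonnegative solutions of
`u i r = λ i + ∫_{(r,t]} u i dγ i i + ∫_{(r,t]} u j dgam i j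
  + ∫_{(r,t]}∫ (1 − e^{-⟨u(s),z⟩}) μ i (ds,dz)` coincide on `[0,t]`. -/
theorem stmt13 (t : ℝ) (ht : 0 < t) (lam : Fin 2 → ℝ) (hlam : ∀ i, 0 ≤ lam i)
    (gp gn : Fin 2 → StieltjesFunction ℝ)
    (hjump : ∀ i, ∀ s : ℝ,
      (-1 : ℝ) < ((gp i).measure {s}).toReal - ((gn i).measure {s}).toReal)
    (gam : Fin 2 → Fin 2 → StieltjesFunction ℝ)
    (μ : Fin 2 → Measure (ℝ × (ℝ × ℝ)))
    (hμsupp : ∀ i, ∀ᵐ p ∂(μ i), 0 < p.1 ∧ 0 ≤ p.2.1 ∧ 0 ≤ p.2.2 ∧ p.2 ≠ (0, 0))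
    (hμmom : ∀ i, ∀ T : ℝ, IntegrableOn (fun p : ℝ × (ℝ × ℝ) => p.2.1 + p.2.2)
      (Set.Ioc 0 T ×ˢ (Set.univ : Set (ℝ × ℝ))) (μ i))
    (u w : Fin 2 → ℝ → ℝ)
    (hu_meas : ∀ i, Measurable (u i)) (hw_meas : ∀ i, Measurable (w i))
    (hu_nonneg : ∀ i, ∀ r ∈ Set.Icc (0 : ℝ) t, 0 ≤ u i r)
    (hw_nonneg : ∀ i, ∀ r ∈ Set.Icc (0 : ℝ) t, 0 ≤ w i r)
    (hu_bdd : ∃ C, ∀ i, ∀ r ∈ Set.Icc (0 : ℝ) t, u i r ≤ C)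
    (hw_bdd : ∃ C, ∀ i, ∀ r ∈ Set.Icc (0 : ℝ) t, w i r ≤ C)
    (hu : ∀ i j : Fin 2, i ≠ j → ∀ r ∈ Set.Icc (0 : ℝ) t,
      u i r = lam i +
        ((∫ s in Set.Ioc r t, u i s ∂(gp i).measure) -
          ∫ s in Set.Ioc r t, u i s ∂(gn i).measure) +
        (∫ s in Set.Ioc r t, u j s ∂(gam i j).measure) +
        ∫ p in Set.Ioc r t ×ˢ (Set.univ : Set (ℝ × ℝ)),
          (1 - Real.exp (-(u 0 p.1 * p.2.1 + u 1 p.1 * p.2.2))) ∂(μ i))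
    (hw : ∀ i j : Fin 2, i ≠ j → ∀ r ∈ Set.Icc (0 : ℝ) t,
      w i r = lam i +
        ((∫ s in Set.Ioc r t, w i s ∂(gp i).measure) -
          ∫ s in Set.Ioc r t, w i s ∂(gn i).measure) +
        (∫ s in Set.Ioc r t, w j s ∂(gam i j).measure) +
        ∫ p in Set.Ioc r t ×ˢ (Set.univ : Set (ℝ × ℝ)),
          (1 - Real.exp (-(w 0 p.1 * p.2.1 + w 1 p.1 * p.2.2))) ∂(μ i)) :
    ∀ i, ∀ r ∈ Set.Icc (0 : ℝ) t, u i r = w i r :=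
  stmt13_general t lam gp gn gam μ hμsupp hμmom u w hu_meas hw_meas hu_nonneg hw_nonneg hu_bdd
    hw_bdd hu hw
end

section
/- Moment formula via differentiation of the Laplace transform: let Q be a probability measure on ℝ₊² such that ∫ e^{-⟨λ,y⟩} Q(dy) = e^{-⟨x, v(λ)⟩} for all λ ∈ ℝ₊², where x ∈ ℝ₊² and v : ℝ₊² → ℝ₊² is such that a ↦ v(aλ) is differentiable at 0 with v(0) = 0 and derivative π(λ), and ∫ ⟨λ,y⟩ Q(dy) < ∞. Then ∫ ⟨λ,y⟩ Q(dy) = ⟨x, π(λ)⟩ for all λ ∈ ℝ₊². -/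
/-! The Laplace transform `F(a) = ∫ e^{-a⟨λ,y⟩} Q(dy)` has right derivative `-∫ ⟨λ,y⟩ Q(dy)` at `0`
by dominated convergence, since `0 ≤ (1 - e^{-at}) / a ≤ t` for `a > 0`, `t ≥ 0`. On the other hand
`F(a) = e^{-⟨x, v(aλ)⟩}`, whose right derivative at `0` is `-F(0)⟨x, π(λ)⟩ = -⟨x, π(λ)⟩`. Right
derivatives on `[0, ∞)` are unique. -/

open Real MeasureTheory Set Filter Topology

lemma abs_exp_neg_sub_one_le {t : ℝ} (ht : 0 ≤ t) : |exp (-t) - 1| ≤ t := by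
  have hle : exp (-t) ≤ 1 := exp_le_one_iff.mpr (neg_nonpos.mpr ht)
  have hge : -t + 1 ≤ exp (-t) := add_one_le_exp (-t)
  rw [abs_of_nonpos (sub_nonpos.mpr hle)]
  linarith

lemma hasDerivWithinAt_integral_exp_neg_mul_Ici {α : Type*} [MeasurableSpace α] {μ : Measure α}
    [IsFiniteMeasure μ] {g : α → ℝ} (hg : Integrable g μ) (hg0 : 0 ≤ᵐ[μ] g) :
    HasDerivWithinAt (fun a : ℝ => ∫ y, exp (-(a * g y)) ∂μ) (-∫ y, g y ∂μ) (Ici 0) 0 := by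
  have hmeas : ∀ a : ℝ, AEStronglyMeasurable (fun y => exp (-(a * g y))) μ := fun a =>
    continuous_exp.comp_aestronglyMeasurable (hg.aestronglyMeasurable.const_mul a).neg
  have hint : ∀ a : ℝ, 0 ≤ a → Integrable (fun y => exp (-(a * g y))) μ := fun a ha =>
    (integrable_const 1).mono' (hmeas a) <| by
      filter_upwards [hg0] with y hy
      rw [norm_of_nonneg (exp_pos _).le, exp_le_one_iff, neg_nonpos]
      exact mul_nonneg ha hy
  have hslope : ∀ a ∈ Ioi (0 : ℝ), (∫ y, (exp (-(a * g y)) - 1) / a ∂μ) =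
      slope (fun a : ℝ => ∫ y, exp (-(a * g y)) ∂μ) 0 a := fun a ha => by
    simp [slope_def_field, integral_div, integral_sub (hint a (le_of_lt ha)) (integrable_const 1)]
  rw [hasDerivWithinAt_iff_tendsto_slope, Ici_sdiff_left, ← integral_neg]
  refine (tendsto_integral_filter_of_dominated_convergence
    (F := fun a y => (exp (-(a * g y)) - 1) / a) g ?_ ?_ hg ?_).congr' ?_
  · refine Eventually.of_forall fun a => ?_
    have := hmeas a
    fun_prop
  · filter_upwards [self_mem_nhdsWithin] with a (ha : 0 < a)
    filter_upwards [hg0] with y hy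
    rw [norm_div, norm_of_nonneg ha.le, div_le_iff₀ ha, mul_comm (g y)]
    exact abs_exp_neg_sub_one_le (mul_nonneg ha.le hy)
  · refine Eventually.of_forall fun y => ?_
    have hderiv : HasDerivAt (fun a : ℝ => exp (-(a * g y))) (-g y) 0 := by
      simpa using ((hasDerivAt_mul_const (x := 0) (g y)).neg).exp
    refine (hasDerivAt_iff_tendsto_slope.mp hderiv).mono_left
      (nhdsWithin_mono 0 fun a (ha : 0 < a) => ha.ne') |>.congr fun a => ?_
    simp [slope_def_field]
  · filter_upwards [self_mem_nhdsWithin] with a ha using hslope a ha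

theorem stmt19_general (Q : Measure (ℝ × ℝ)) [IsProbabilityMeasure Q]
    (hsupp : ∀ᵐ y ∂Q, 0 ≤ y.1 ∧ 0 ≤ y.2)
    (x1 x2 : ℝ)
    (v : ℝ × ℝ → ℝ × ℝ)
    (hLaplace : ∀ l : ℝ × ℝ, 0 ≤ l.1 → 0 ≤ l.2 →
      ∫ y, Real.exp (-(l.1 * y.1 + l.2 * y.2)) ∂Q =
        Real.exp (-(x1 * (v l).1 + x2 * (v l).2)))
    (pi : ℝ × ℝ → ℝ × ℝ)
    (hderiv : ∀ l : ℝ × ℝ, 0 ≤ l.1 → 0 ≤ l.2 →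
      HasDerivWithinAt (fun a : ℝ => x1 * (v (a * l.1, a * l.2)).1 +
          x2 * (v (a * l.1, a * l.2)).2)
        (x1 * (pi l).1 + x2 * (pi l).2) (Set.Ici (0 : ℝ)) 0)
    (hmom : Integrable (fun y : ℝ × ℝ => y.1 + y.2) Q) :
    ∀ l : ℝ × ℝ, 0 ≤ l.1 → 0 ≤ l.2 →
      ∫ y, (l.1 * y.1 + l.2 * y.2) ∂Q = x1 * (pi l).1 + x2 * (pi l).2 := by
  intro l hl1 hl2
  set g : ℝ × ℝ → ℝ := fun y => l.1 * y.1 + l.2 * y.2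
  set F : ℝ → ℝ := fun a => ∫ y, exp (-(a * g y)) ∂Q
  have hg0 : 0 ≤ᵐ[Q] g := by
    filter_upwards [hsupp] with y hy
    exact add_nonneg (mul_nonneg hl1 hy.1) (mul_nonneg hl2 hy.2)
  have hg : Integrable g Q := (hmom.const_mul (l.1 + l.2)).mono' (by fun_prop) <| by
    filter_upwards [hg0, hsupp] with y hy hy'
    rw [norm_of_nonneg hy]
    nlinarith [hy'.1, hy'.2]
  have hF_eq : EqOn F (fun a => exp (-(x1 * (v (a * l.1, a * l.2)).1 +
      x2 * (v (a * l.1, a * l.2)).2))) (Ici 0) := fun a (ha : 0 ≤ a) => by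
    dsimp only
    rw [← hLaplace _ (mul_nonneg ha hl1) (mul_nonneg ha hl2)]
    simp only [F, g]
    ring_nf
  have hF_laplace : HasDerivWithinAt F (F 0 * -(x1 * (pi l).1 + x2 * (pi l).2)) (Ici 0) 0 := by
    refine ((hderiv l hl1 hl2).neg.exp).congr_of_mem hF_eq self_mem_Ici |>.congr_deriv ?_
    rw [hF_eq self_mem_Ici]
    rfl
  have hF_moment : HasDerivWithinAt F (-∫ y, g y ∂Q) (Ici 0) 0 :=
    hasDerivWithinAt_integral_exp_neg_mul_Ici hg hg0
  have hF0 : F 0 = 1 := by simp [F]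
  have h := (uniqueDiffOn_Ici 0 0 self_mem_Ici).eq_deriv _ hF_moment hF_laplace
  rwa [hF0, one_mul, neg_inj] at h

/-- moment formula via differentiation of the Laplace transform.
If `Q` is a probability measure on `ℝ₊²` with `∫ e^{-⟨λ,y⟩} Q(dy) = e^{-⟨x,v(λ)⟩}`
for all `λ ∈ ℝ₊²`, `v(0) = 0`, for each `λ ∈ ℝ₊²` the map `a ↦ ⟨x, v(aλ)⟩` is
differentiable (from the right) at `0` with derivative `⟨x, pi(λ)⟩`, and the first
moment of `Q` is finite, then `∫ ⟨λ,y⟩ Q(dy) = ⟨x, pi(λ)⟩` for all `λ ∈ ℝ₊²`. -/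
theorem stmt19 (Q : Measure (ℝ × ℝ)) [IsProbabilityMeasure Q]
    (hsupp : ∀ᵐ y ∂Q, 0 ≤ y.1 ∧ 0 ≤ y.2)
    (x1 x2 : ℝ) (hx1 : 0 ≤ x1) (hx2 : 0 ≤ x2)
    (v : ℝ × ℝ → ℝ × ℝ)
    (hvpos : ∀ l : ℝ × ℝ, 0 ≤ l.1 → 0 ≤ l.2 → 0 ≤ (v l).1 ∧ 0 ≤ (v l).2)
    (hLaplace : ∀ l : ℝ × ℝ, 0 ≤ l.1 → 0 ≤ l.2 →
      ∫ y, Real.exp (-(l.1 * y.1 + l.2 * y.2)) ∂Q =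
        Real.exp (-(x1 * (v l).1 + x2 * (v l).2)))
    (hv0 : v (0, 0) = (0, 0))
    (pi : ℝ × ℝ → ℝ × ℝ)
    (hderiv : ∀ l : ℝ × ℝ, 0 ≤ l.1 → 0 ≤ l.2 →
      HasDerivWithinAt (fun a : ℝ => x1 * (v (a * l.1, a * l.2)).1 +
          x2 * (v (a * l.1, a * l.2)).2)
        (x1 * (pi l).1 + x2 * (pi l).2) (Set.Ici (0 : ℝ)) 0)
    (hmom : Integrable (fun y : ℝ × ℝ => y.1 + y.2) Q) :
    ∀ l : ℝ × ℝ, 0 ≤ l.1 → 0 ≤ l.2 →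
      ∫ y, (l.1 * y.1 + l.2 * y.2) ∂Q = x1 * (pi l).1 + x2 * (pi l).2 :=
  stmt19_general Q hsupp x1 x2 v hLaplace pi hderiv hmom
end
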